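/- (Convexity of ultra summit sets) Let G be a Garside group, x ∈ G, and y, z ∈ U_x. Then there exist elements y₀,…,y_t ∈ U_x and simple elements c₁,…,c_t ∈ D such that y₀ = y, y_t = z, and y_{i-1}^{c_i} = y_i for i = 1,…,t. -/

import Mathlib

namespace GarsideFormal

variable (G : Type*) [Group G]

/-- An atom of the submonoid `M`: a nontrivial element admitting no nontrivial
factorization inside `M`. -/
def IsMAtom (M : Submonoid G) (a : G) : Prop :=
  a ∈ M ∧ a ≠ 1 ∧ ∀ b ∈ M, ∀ c ∈ M, a = b * c → b = 1 ∨ c = 1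

/-- A Garside monoid `M`, realized as a submonoid (positive cone) of its group of
fractions `G`, together with its Garside element `δ`, left gcd and left lcm
operations (extended to `G`), and the cycling operation `cyc`. -/
structure Garside where
  M : Submonoid G
  δ : G
  gcd : G → G → G
  lcm : G → G → G
  cyc : G → G
  δ_mem : δ ∈ M
  /-- `G` is the group of fractions of `M`. -/
  fractions : ∀ g : G, ∃ a ∈ M, ∃ b ∈ M, g = a⁻¹ * b
  /-- `M` is generated by its atoms. -/
  atoms_generate : Submonoid.closure {a : G | IsMAtom G M a} = M
  /-- Atomicity: bounded factorization lengths into atoms. -/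
  atomic_bound : ∀ a ∈ M, ∃ N : ℕ, ∀ L : List G,
      (∀ b ∈ L, IsMAtom G M b) → L.prod = a → L.length ≤ N
  /-- Left divisors of `δ` coincide with right divisors of `δ`. -/
  divs_eq : {x : G | x ∈ M ∧ x⁻¹ * δ ∈ M} = {x : G | x ∈ M ∧ δ * x⁻¹ ∈ M}
  divs_finite : Set.Finite {x : G | x ∈ M ∧ x⁻¹ * δ ∈ M}
  divs_generate : Submonoid.closure {x : G | x ∈ M ∧ x⁻¹ * δ ∈ M} = M
  gcd_dvd_left : ∀ a b : G, (gcd a b)⁻¹ * a ∈ M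
  gcd_dvd_right : ∀ a b : G, (gcd a b)⁻¹ * b ∈ M
  gcd_greatest : ∀ a b x : G, x⁻¹ * a ∈ M → x⁻¹ * b ∈ M → x⁻¹ * gcd a b ∈ M
  lcm_dvd_left : ∀ a b : G, a⁻¹ * lcm a b ∈ M
  lcm_dvd_right : ∀ a b : G, b⁻¹ * lcm a b ∈ M
  lcm_least : ∀ a b x : G, a⁻¹ * x ∈ M → b⁻¹ * x ∈ M → (lcm a b)⁻¹ * x ∈ M
  /-- Cycling: if `k = inf x` then `cyc x = x ^ (τ⁻ᵏ A₁)` where `A₁ = δ ∧ δ⁻ᵏ x`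
  is the first factor of the left normal form of `x` (when `len x = 0` this
  gcd is `1` and `cyc x = x`). -/
  cyc_spec : ∀ (x : G) (k : ℤ),
      ((δ ^ k)⁻¹ * x ∈ M ∧ ∀ j : ℤ, (δ ^ j)⁻¹ * x ∈ M → j ≤ k) →
      cyc x = (δ ^ k * gcd δ ((δ ^ k)⁻¹ * x) * (δ ^ k)⁻¹)⁻¹ * x *
              (δ ^ k * gcd δ ((δ ^ k)⁻¹ * x) * (δ ^ k)⁻¹)

variable {G}

namespace Garside

variable (S : Garside G)

/-- Left divisibility `a ≼ b`. -/
def dvd (a b : G) : Prop := a⁻¹ * b ∈ S.M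

/-- Simple elements: the (left) divisors of `δ` in `M`. -/
def Simple (a : G) : Prop := a ∈ S.M ∧ a⁻¹ * S.δ ∈ S.M

/-- `k` is the infimum of `x`: maximal with `δ^k ≼ x`. -/
def IsInf (x : G) (k : ℤ) : Prop :=
  (S.δ ^ k)⁻¹ * x ∈ S.M ∧ ∀ j : ℤ, (S.δ ^ j)⁻¹ * x ∈ S.M → j ≤ k

/-- `s` is the supremum of `x`: minimal with `x ≼ δ^s`. -/
def IsSup (x : G) (s : ℤ) : Prop :=
  x⁻¹ * S.δ ^ s ∈ S.M ∧ ∀ j : ℤ, x⁻¹ * S.δ ^ j ∈ S.M → s ≤ j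

/-- `y` lies in the super summit set of `x`: `y` is conjugate to `x`, with
maximal infimum and minimal supremum among all conjugates of `x`. -/
def InSS (x y : G) : Prop :=
  IsConj x y ∧
  (∃ k : ℤ, S.IsInf y k ∧ ∀ z : G, IsConj x z → ∀ k' : ℤ, S.IsInf z k' → k' ≤ k) ∧
  (∃ s : ℤ, S.IsSup y s ∧ ∀ z : G, IsConj x z → ∀ s' : ℤ, S.IsSup z s' → s ≤ s')

/-- `y` lies in the ultra summit set of `x`: it is in the super summit set and
periodic under cycling. -/
def InUS (x y : G) : Prop :=
  S.InSS x y ∧ ∃ n : ℕ, 0 < n ∧ S.cyc^[n] y = y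

/-- `τ^k(z) = δ⁻ᵏ z δᵏ`, where `τ : z ↦ δ⁻¹zδ`. -/
def tauPow (k : ℤ) (z : G) : G := (S.δ ^ k)⁻¹ * z * S.δ ^ k

end Garside

/-- The ordered product `A (i+1) * A (i+2) * ⋯ * A r`. -/
def prodSeg (A : ℕ → G) (i r : ℕ) : G :=
  ((List.range (r - i)).map (fun j => A (i + 1 + j))).prod

namespace Garside

variable (S : Garside G)

/-- `x` has left normal form `δ^k A₁ ⋯ A_r`: each `Aᵢ` is a nontrivial simple
element and `(Aᵢ⁻¹ δ) ∧ A_{i+1} = 1`. -/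
def IsNormalForm (x : G) (k : ℤ) (r : ℕ) (A : ℕ → G) : Prop :=
  x = S.δ ^ k * prodSeg A 0 r ∧
  (∀ i, 1 ≤ i → i ≤ r → S.Simple (A i) ∧ A i ≠ 1) ∧
  (∀ i, 1 ≤ i → i < r → S.gcd ((A i)⁻¹ * S.δ) (A (i + 1)) = 1)

/-- The sequence `u₀, …, u_r` of the transport construction for `(x, u)`,
where `x` has normal form `δ^k A₁ ⋯ A_r`:
`u₀ = τᵏ(u)`, `u_r = u`, and `uᵢ = (A_{i+1} ⋯ A_r u) ∧ δ·τ(Aᵢ⁻¹ u_{i-1})`. -/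
def IsTransportSeq (k : ℤ) (r : ℕ) (A : ℕ → G) (u : G) (useq : ℕ → G) : Prop :=
  useq 0 = S.tauPow k u ∧ useq r = u ∧
  ∀ i, 1 ≤ i → i ≤ r →
    useq i = S.gcd (prodSeg A i r * u) (S.δ * S.tauPow 1 ((A i)⁻¹ * useq (i - 1)))

/-- The transport `φ_x(u) = τ⁻ᵏ(u₁) = τ⁻ᵏ(A₁⁻¹ · τᵏ(u) · (δ ∧ δ⁻ᵏ(x^u)))`,
where `k = inf x` and `A₁ = δ ∧ δ⁻ᵏ x`. -/
def transp (k : ℤ) (x u : G) : G :=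
  S.δ ^ k *
    ((S.gcd S.δ ((S.δ ^ k)⁻¹ * x))⁻¹ * S.tauPow k u *
      S.gcd S.δ ((S.δ ^ k)⁻¹ * (u⁻¹ * x * u))) * (S.δ ^ k)⁻¹


variable {G : Type*} [Group G] (S : Garside G)

/-! ### Basic divisibility lemmas -/

lemma dvd_refl (a : G) : S.dvd a a := by
  show a⁻¹ * a ∈ S.M; simp [S.M.one_mem]

lemma dvd_of_mem {a : G} (h : a ∈ S.M) : S.dvd 1 a := by
  show (1:G)⁻¹ * a ∈ S.M; simpa using h

lemma mem_of_dvd_one {a : G} (h : S.dvd 1 a) : a ∈ S.M := by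
  have : (1:G)⁻¹ * a ∈ S.M := h
  simpa using this

lemma dvd_trans {a b c : G} (h1 : S.dvd a b) (h2 : S.dvd b c) : S.dvd a c := by
  have h := S.M.mul_mem h1 h2
  have e : a⁻¹ * b * (b⁻¹ * c) = a⁻¹ * c := by group
  show a⁻¹ * c ∈ S.M
  rwa [e] at h

lemma dvd_mul_right {a b : G} (h : b ∈ S.M) : S.dvd a (a * b) := by
  show a⁻¹ * (a * b) ∈ S.M; simpa using h

lemma dvd_mul_left_cancel {c a b : G} (h : S.dvd a b) : S.dvd (c * a) (c * b) := by
  have e : (c * a)⁻¹ * (c * b) = a⁻¹ * b := by group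
  show (c * a)⁻¹ * (c * b) ∈ S.M
  rw [e]; exact h

lemma dvd_of_mul_left_cancel {c a b : G} (h : S.dvd (c * a) (c * b)) : S.dvd a b := by
  have e : (c * a)⁻¹ * (c * b) = a⁻¹ * b := by group
  show a⁻¹ * b ∈ S.M
  rw [← e]; exact h

/-! ### Antisymmetry via atomicity -/

lemma eq_one_of_mem_inv_mem {a : G} (ha : a ∈ S.M) (hi : a⁻¹ ∈ S.M) : a = 1 := by
  by_contra hne
  have h1 : a ∈ Submonoid.closure {b : G | IsMAtom G S.M b} := by
    rw [S.atoms_generate]; exact ha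
  have h2 : a⁻¹ ∈ Submonoid.closure {b : G | IsMAtom G S.M b} := by
    rw [S.atoms_generate]; exact hi
  obtain ⟨L1, hL1, hp1⟩ := Submonoid.exists_list_of_mem_closure h1
  obtain ⟨L2, hL2, hp2⟩ := Submonoid.exists_list_of_mem_closure h2
  obtain ⟨N, hN⟩ := S.atomic_bound 1 S.M.one_mem
  set L : List G := L1 ++ L2 with hL
  have hLpos : 0 < L.length := by
    rcases L1 with _ | ⟨hd, tl⟩
    · simp at hp1; exact absurd hp1.symm hne
    · simp [hL]
  have hLprod : L.prod = 1 := by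
    simp [hL, List.prod_append, hp1, hp2]
  have hLatoms : ∀ b ∈ L, IsMAtom G S.M b := by
    intro b hb
    rcases List.mem_append.mp hb with h | h
    · exact hL1 b h
    · exact hL2 b h
  -- repeat the list N+1 times
  set K : List G := (List.replicate (N + 1) L).flatten with hK
  have hKlen : K.length = (N + 1) * L.length := by
    simp [hK, List.length_flatten, List.map_replicate]
    try ring
  have hKatoms : ∀ b ∈ K, IsMAtom G S.M b := by
    intro b hb
    rw [hK, List.mem_flatten] at hb
    obtain ⟨l, hl, hbl⟩ := hb
    rw [List.mem_replicate] at hl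
    exact hLatoms b (hl.2 ▸ hbl)
  have hKprod : K.prod = 1 := by
    rw [hK, List.prod_flatten]
    simp [List.map_replicate, hLprod]
  have := hN K hKatoms hKprod
  rw [hKlen] at this
  nlinarith [hLpos, this]

lemma dvd_antisymm {a b : G} (h1 : S.dvd a b) (h2 : S.dvd b a) : a = b := by
  have hinv : (a⁻¹ * b)⁻¹ ∈ S.M := by
    have e : (a⁻¹ * b)⁻¹ = b⁻¹ * a := by group
    rw [e]; exact h2
  have := S.eq_one_of_mem_inv_mem h1 hinv
  exact (inv_mul_eq_one.mp this)

/-! ### gcd / lcm lemmas -/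

lemma dvd_gcd {a b c : G} (h1 : S.dvd c a) (h2 : S.dvd c b) : S.dvd c (S.gcd a b) :=
  S.gcd_greatest a b c h1 h2

lemma gcd_dvd_left' (a b : G) : S.dvd (S.gcd a b) a := S.gcd_dvd_left a b

lemma gcd_dvd_right' (a b : G) : S.dvd (S.gcd a b) b := S.gcd_dvd_right a b

lemma gcd_eq_of {a b c : G} (h1 : S.dvd c a) (h2 : S.dvd c b)
    (h3 : ∀ t : G, S.dvd t a → S.dvd t b → S.dvd t c) : S.gcd a b = c :=
  S.dvd_antisymm (h3 _ (S.gcd_dvd_left' a b) (S.gcd_dvd_right' a b)) (S.dvd_gcd h1 h2)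

lemma gcd_mem {a b : G} (ha : a ∈ S.M) (hb : b ∈ S.M) : S.gcd a b ∈ S.M :=
  S.mem_of_dvd_one (S.dvd_gcd (S.dvd_of_mem ha) (S.dvd_of_mem hb))

lemma gcd_mul_left (c a b : G) : S.gcd (c * a) (c * b) = c * S.gcd a b := by
  apply S.gcd_eq_of
  · exact S.dvd_mul_left_cancel (S.gcd_dvd_left' a b)
  · exact S.dvd_mul_left_cancel (S.gcd_dvd_right' a b)
  · intro t ht1 ht2
    have h1 : S.dvd (c⁻¹ * t) a := by
      have := S.dvd_mul_left_cancel (c := c⁻¹) ht1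
      rwa [inv_mul_cancel_left] at this
    have h2 : S.dvd (c⁻¹ * t) b := by
      have := S.dvd_mul_left_cancel (c := c⁻¹) ht2
      rwa [inv_mul_cancel_left] at this
    have := S.dvd_mul_left_cancel (c := c) (S.dvd_gcd h1 h2)
    rwa [mul_inv_cancel_left] at this

lemma gcd_eq_left {a b : G} (h : S.dvd a b) : S.gcd a b = a :=
  S.dvd_antisymm (S.gcd_dvd_left' a b) (S.dvd_gcd (S.dvd_refl a) h)

lemma gcd_one_right_of_mem {a : G} (ha : a ∈ S.M) : S.gcd a 1 = 1 :=
  S.dvd_antisymm (S.gcd_dvd_right' a 1) (S.dvd_gcd (S.dvd_of_mem ha) (S.dvd_refl 1))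

lemma dvd_lcm_left (a b : G) : S.dvd a (S.lcm a b) := S.lcm_dvd_left a b
lemma dvd_lcm_right (a b : G) : S.dvd b (S.lcm a b) := S.lcm_dvd_right a b
lemma lcm_dvd {a b c : G} (h1 : S.dvd a c) (h2 : S.dvd b c) : S.dvd (S.lcm a b) c :=
  S.lcm_least a b c h1 h2

/-! ### τ (conjugation by δ) -/

lemma tau_mem_of_simple {s : G} (h : S.Simple s) : S.δ⁻¹ * s * S.δ ∈ S.M := by
  obtain ⟨hs, hsd⟩ := h
  have hb_right : S.δ * (s⁻¹ * S.δ)⁻¹ ∈ S.M := by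
    have e : S.δ * (s⁻¹ * S.δ)⁻¹ = s := by group
    rw [e]; exact hs
  have hb_left : (s⁻¹ * S.δ)⁻¹ * S.δ ∈ S.M := by
    have h2 : (s⁻¹ * S.δ) ∈ {x : G | x ∈ S.M ∧ S.δ * x⁻¹ ∈ S.M} := ⟨hsd, hb_right⟩
    rw [← S.divs_eq] at h2
    exact h2.2
  have e : S.δ⁻¹ * s * S.δ = (s⁻¹ * S.δ)⁻¹ * S.δ := by group
  rw [e]; exact hb_left

lemma simple_tau {s : G} (h : S.Simple s) : S.Simple (S.δ⁻¹ * s * S.δ) := by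
  refine ⟨S.tau_mem_of_simple h, ?_⟩
  have hb : S.Simple (s⁻¹ * S.δ) := by
    refine ⟨h.2, ?_⟩
    have e : (s⁻¹ * S.δ)⁻¹ * S.δ = S.δ⁻¹ * s * S.δ := by group
    rw [e]; exact S.tau_mem_of_simple h
  have := S.tau_mem_of_simple hb
  have e : (S.δ⁻¹ * s * S.δ)⁻¹ * S.δ = S.δ⁻¹ * (s⁻¹ * S.δ) * S.δ := by group
  rw [e]; exact this

lemma tauInv_mem_of_simple {s : G} (h : S.Simple s) : S.δ * s * S.δ⁻¹ ∈ S.M := by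
  obtain ⟨hs, hsd⟩ := h
  have hc : S.δ * s⁻¹ ∈ S.M := by
    have h2 : s ∈ {x : G | x ∈ S.M ∧ x⁻¹ * S.δ ∈ S.M} := ⟨hs, hsd⟩
    rw [S.divs_eq] at h2
    exact h2.2
  have hc_left : (S.δ * s⁻¹)⁻¹ * S.δ ∈ S.M := by
    have e : (S.δ * s⁻¹)⁻¹ * S.δ = s := by group
    rw [e]; exact hs
  have h3 : (S.δ * s⁻¹) ∈ {x : G | x ∈ S.M ∧ x⁻¹ * S.δ ∈ S.M} := ⟨hc, hc_left⟩
  rw [S.divs_eq] at h3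
  have e : S.δ * s * S.δ⁻¹ = S.δ * (S.δ * s⁻¹)⁻¹ := by group
  rw [e]; exact h3.2

lemma simple_tauInv {s : G} (h : S.Simple s) : S.Simple (S.δ * s * S.δ⁻¹) := by
  refine ⟨S.tauInv_mem_of_simple h, ?_⟩
  have hc : S.δ * s⁻¹ ∈ S.M := by
    have h2 : s ∈ {x : G | x ∈ S.M ∧ x⁻¹ * S.δ ∈ S.M} := ⟨h.1, h.2⟩
    rw [S.divs_eq] at h2
    exact h2.2
  have e : (S.δ * s * S.δ⁻¹)⁻¹ * S.δ = S.δ * s⁻¹ := by group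
  rw [e]; exact hc

lemma tau_mem {m : G} (hm : m ∈ S.M) : S.δ⁻¹ * m * S.δ ∈ S.M := by
  have hm' : m ∈ Submonoid.closure {x : G | x ∈ S.M ∧ x⁻¹ * S.δ ∈ S.M} := by
    rw [S.divs_generate]; exact hm
  clear hm
  induction hm' using Submonoid.closure_induction with
  | mem s hs => exact S.tau_mem_of_simple hs
  | one => simpa using S.M.one_mem
  | mul a b _ _ ha hb =>
      have := S.M.mul_mem ha hb
      have e : S.δ⁻¹ * a * S.δ * (S.δ⁻¹ * b * S.δ) = S.δ⁻¹ * (a * b) * S.δ := by group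
      rwa [e] at this

lemma tauInv_mem {m : G} (hm : m ∈ S.M) : S.δ * m * S.δ⁻¹ ∈ S.M := by
  have hm' : m ∈ Submonoid.closure {x : G | x ∈ S.M ∧ x⁻¹ * S.δ ∈ S.M} := by
    rw [S.divs_generate]; exact hm
  clear hm
  induction hm' using Submonoid.closure_induction with
  | mem s hs => exact S.tauInv_mem_of_simple hs
  | one => simpa using S.M.one_mem
  | mul a b _ _ ha hb =>
      have := S.M.mul_mem ha hb
      have e : S.δ * a * S.δ⁻¹ * (S.δ * b * S.δ⁻¹) = S.δ * (a * b) * S.δ⁻¹ := by group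
      rwa [e] at this

lemma tauPow_mem (j : ℤ) {m : G} (hm : m ∈ S.M) : (S.δ ^ j)⁻¹ * m * S.δ ^ j ∈ S.M := by
  induction j using Int.induction_on with
  | zero => simpa using hm
  | succ n ih =>
      have := S.tau_mem ih
      have e : S.δ⁻¹ * ((S.δ ^ (n : ℤ))⁻¹ * m * S.δ ^ (n : ℤ)) * S.δ
          = (S.δ ^ ((n : ℤ) + 1))⁻¹ * m * S.δ ^ ((n : ℤ) + 1) := by
        rw [zpow_add_one]; group
      rwa [e] at this
  | pred n ih =>
      have := S.tauInv_mem ih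
      have e : S.δ * ((S.δ ^ (-(n : ℤ)))⁻¹ * m * S.δ ^ (-(n : ℤ))) * S.δ⁻¹
          = (S.δ ^ (-(n : ℤ) - 1))⁻¹ * m * S.δ ^ (-(n : ℤ) - 1) := by
        rw [zpow_sub_one]; group
      rwa [e] at this

lemma zpow_mem_of_nonneg {j : ℤ} (h : 0 ≤ j) : S.δ ^ j ∈ S.M := by
  lift j to ℕ using h
  rw [zpow_natCast]
  exact pow_mem S.δ_mem j

lemma simple_delta : S.Simple S.δ := ⟨S.δ_mem, by simpa using S.M.one_mem⟩

lemma simple_one : S.Simple (1 : G) := ⟨S.M.one_mem, by simpa using S.δ_mem⟩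

lemma simple_tauPow (j : ℤ) {s : G} (h : S.Simple s) :
    S.Simple ((S.δ ^ j)⁻¹ * s * S.δ ^ j) := by
  induction j using Int.induction_on with
  | zero => simpa using h
  | succ n ih =>
      have := S.simple_tau ih
      have e : S.δ⁻¹ * ((S.δ ^ (n : ℤ))⁻¹ * s * S.δ ^ (n : ℤ)) * S.δ
          = (S.δ ^ ((n : ℤ) + 1))⁻¹ * s * S.δ ^ ((n : ℤ) + 1) := by
        rw [zpow_add_one]; group
      rwa [e] at this
  | pred n ih =>
      have := S.simple_tauInv ih
      have e : S.δ * ((S.δ ^ (-(n : ℤ)))⁻¹ * s * S.δ ^ (-(n : ℤ))) * S.δ⁻¹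
          = (S.δ ^ (-(n : ℤ) - 1))⁻¹ * s * S.δ ^ (-(n : ℤ) - 1) := by
        rw [zpow_sub_one]; group
      rwa [e] at this

/-- Right-δ-power multiplication preserves divisibility. -/
lemma dvd_mul_zpow {a b : G} (j : ℤ) (h : S.dvd a b) : S.dvd (a * S.δ ^ j) (b * S.δ ^ j) := by
  have := S.tauPow_mem j h
  have e : (S.δ ^ j)⁻¹ * (a⁻¹ * b) * S.δ ^ j = (a * S.δ ^ j)⁻¹ * (b * S.δ ^ j) := by group
  show _ ∈ S.M
  rw [← e]; exact this

lemma dvd_of_mul_zpow {a b : G} (j : ℤ) (h : S.dvd (a * S.δ ^ j) (b * S.δ ^ j)) : S.dvd a b := by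
  have := S.dvd_mul_zpow (-j) h
  have e : a * S.δ ^ j * S.δ ^ (-j) = a := by
    group
  have e' : b * S.δ ^ j * S.δ ^ (-j) = b := by
    group
  rwa [e, e'] at this

lemma gcd_mul_zpow (a b : G) (j : ℤ) :
    S.gcd a b * S.δ ^ j = S.gcd (a * S.δ ^ j) (b * S.δ ^ j) := by
  symm
  apply S.gcd_eq_of
  · exact S.dvd_mul_zpow j (S.gcd_dvd_left' a b)
  · exact S.dvd_mul_zpow j (S.gcd_dvd_right' a b)
  · intro t ht1 ht2
    have h1 : S.dvd (t * S.δ ^ (-j)) a := by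
      have := S.dvd_mul_zpow (-j) ht1
      have e : a * S.δ ^ j * S.δ ^ (-j) = a := by group
      rwa [e] at this
    have h2 : S.dvd (t * S.δ ^ (-j)) b := by
      have := S.dvd_mul_zpow (-j) ht2
      have e : b * S.δ ^ j * S.δ ^ (-j) = b := by group
      rwa [e] at this
    have := S.dvd_mul_zpow j (S.dvd_gcd h1 h2)
    have e : t * S.δ ^ (-j) * S.δ ^ j = t := by group
    rwa [e] at this


/-! ### Products of simple elements -/

lemma delta_mul_inv_mem_of_simple {s : G} (h : S.Simple s) : S.δ * s⁻¹ ∈ S.M := by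
  have h2 : s ∈ {x : G | x ∈ S.M ∧ x⁻¹ * S.δ ∈ S.M} := ⟨h.1, h.2⟩
  rw [S.divs_eq] at h2
  exact h2.2

lemma simple_of_right_div {a : G} (ha : a ∈ S.M) (h : S.δ * a⁻¹ ∈ S.M) : S.Simple a := by
  have h2 : a ∈ {x : G | x ∈ S.M ∧ S.δ * x⁻¹ ∈ S.M} := ⟨ha, h⟩
  rw [← S.divs_eq] at h2
  exact ⟨ha, h2.2⟩

/-- `u` is a product of `m` simple elements. -/
def SD (m : ℕ) (u : G) : Prop :=
  ∃ L : List G, (∀ s ∈ L, S.Simple s) ∧ L.length = m ∧ L.prod = u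

lemma SD_mem {m : ℕ} {u : G} (h : S.SD m u) : u ∈ S.M := by
  obtain ⟨L, hL, _, hprod⟩ := h
  subst hprod
  exact Submonoid.list_prod_mem _ (fun s hs => (hL s hs).1)

lemma SD_one : S.SD 0 (1 : G) := ⟨[], by simp, rfl, rfl⟩

lemma SD_delta_pow (m : ℕ) : S.SD m (S.δ ^ m) := by
  refine ⟨List.replicate m S.δ, ?_, by simp, by simp⟩
  intro s hs
  rw [List.mem_replicate] at hs
  rw [hs.2]
  exact S.simple_delta

lemma SD_dvd_pow {m : ℕ} {u : G} (h : S.SD m u) : u⁻¹ * S.δ ^ m ∈ S.M := by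
  obtain ⟨L, hL, hlen, hprod⟩ := h
  subst hlen hprod
  induction L with
  | nil => simpa using S.M.one_mem
  | cons s L ih =>
      have hs := hL s (by simp)
      have hw := ih (fun t ht => hL t (by simp [ht]))
      have hshift : (S.δ ^ L.length)⁻¹ * (s⁻¹ * S.δ) * S.δ ^ L.length ∈ S.M := by
        have := S.tauPow_mem (L.length : ℤ) hs.2
        rwa [zpow_natCast] at this
      have hmul := S.M.mul_mem hw hshift
      have e : L.prod⁻¹ * S.δ ^ L.length *
          ((S.δ ^ L.length)⁻¹ * (s⁻¹ * S.δ) * S.δ ^ L.length)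
          = (s :: L).prod⁻¹ * S.δ ^ (s :: L).length := by
        simp only [List.prod_cons, List.length_cons, pow_succ]
        group
      rwa [e] at hmul

/-- Removing a prefix from a product of `m` simples leaves a product of `m` simples. -/
lemma SD_div : ∀ (L : List G), (∀ s ∈ L, S.Simple s) → ∀ p : G, p ∈ S.M →
    p⁻¹ * L.prod ∈ S.M → S.SD L.length (p⁻¹ * L.prod) := by
  intro L
  induction L with
  | nil =>
      intro _ p hp hpu
      simp only [List.prod_nil, List.length_nil]
      have hp1 : p = 1 := S.eq_one_of_mem_inv_mem hp (by simpa using hpu)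
      subst hp1
      simpa using S.SD_one
  | cons s L ih =>
      intro hL p hp hpu
      have hs : S.Simple s := hL s (by simp)
      have hw : L.prod ∈ S.M := Submonoid.list_prod_mem _ (fun t ht => (hL t (by simp [ht])).1)
      set q := S.lcm p s with hq
      have ha_mem : p⁻¹ * q ∈ S.M := S.lcm_dvd_left p s
      have hb_mem : s⁻¹ * q ∈ S.M := S.lcm_dvd_right p s
      have hq_pd : q⁻¹ * (p * S.δ) ∈ S.M := by
        apply S.lcm_least
        · simpa using S.δ_mem
        · have h1 := S.M.mul_mem hs.2 (S.tau_mem hp)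
          have e : s⁻¹ * S.δ * (S.δ⁻¹ * p * S.δ) = s⁻¹ * (p * S.δ) := by group
          rwa [e] at h1
      have hq_u : q⁻¹ * (s * L.prod) ∈ S.M := by
        apply S.lcm_least
        · simpa only [List.prod_cons] using hpu
        · have e : s⁻¹ * (s * L.prod) = L.prod := by group
          rw [e]; exact hw
      have ha_simple : S.Simple (p⁻¹ * q) := by
        refine ⟨ha_mem, ?_⟩
        have e : (p⁻¹ * q)⁻¹ * S.δ = q⁻¹ * (p * S.δ) := by group
        rw [e]; exact hq_pd
      have hbw : (s⁻¹ * q)⁻¹ * L.prod ∈ S.M := by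
        have e : (s⁻¹ * q)⁻¹ * L.prod = q⁻¹ * (s * L.prod) := by group
        rw [e]; exact hq_u
      obtain ⟨L', hL', hlen', hprod'⟩ := ih (fun t ht => hL t (by simp [ht]))
        (s⁻¹ * q) hb_mem hbw
      refine ⟨(p⁻¹ * q) :: L', ?_, by simp [hlen'], ?_⟩
      · intro t ht
        rcases List.mem_cons.mp ht with h | h
        · rw [h]; exact ha_simple
        · exact hL' t h
      · simp only [List.prod_cons, hprod']
        group

/-- Removing a suffix from a product of `m` simples leaves a product of `m` simples. -/
lemma SD_divRight : ∀ (L : List G), (∀ s ∈ L, S.Simple s) → ∀ c : G, c ∈ S.M →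
    L.prod * c⁻¹ ∈ S.M → S.SD L.length (L.prod * c⁻¹) := by
  intro L
  induction L using List.reverseRecOn with
  | nil =>
      intro _ c hc hpc
      simp only [List.prod_nil, List.length_nil]
      have hc1 : c = 1 := S.eq_one_of_mem_inv_mem hc (by simpa using hpc)
      subst hc1
      simpa using S.SD_one
  | append_singleton L s ih =>
      intro hL c hc hpc
      have hs : S.Simple s := hL s (by simp)
      have hw : L.prod ∈ S.M := Submonoid.list_prod_mem _ (fun t ht => (hL t (by simp [ht])).1)
      have hu_prod : (L ++ [s]).prod = L.prod * s := by simp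
      rw [hu_prod] at hpc ⊢
      set u := L.prod * s with hu
      have hu_mem : u ∈ S.M := S.M.mul_mem hw hs.1
      have hus : u * s⁻¹ ∈ S.M := by
        have e : u * s⁻¹ = L.prod := by rw [hu]; group
        rw [e]; exact hw
      obtain ⟨m₀, hDu⟩ : ∃ n : ℕ, S.δ ^ n * u⁻¹ ∈ S.M := by
        have hsd : S.SD (L ++ [s]).length ((L ++ [s]).prod) := ⟨L ++ [s], hL, rfl, rfl⟩
        have h1 := S.SD_dvd_pow hsd
        rw [hu_prod] at h1
        refine ⟨(L ++ [s]).length, ?_⟩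
        have h2 := S.tauPow_mem (-((L ++ [s]).length : ℤ)) h1
        have e : (S.δ ^ (-((L ++ [s]).length : ℤ)))⁻¹ *
            (u⁻¹ * S.δ ^ (L ++ [s]).length) * S.δ ^ (-((L ++ [s]).length : ℤ))
            = S.δ ^ (L ++ [s]).length * u⁻¹ := by
          rw [zpow_neg, zpow_natCast]; group
        rwa [e] at h2
      set D := S.δ ^ m₀ with hD
      have hDc : D * c⁻¹ ∈ S.M := by
        have h1 := S.M.mul_mem hDu hpc
        have e : D * u⁻¹ * (L.prod * s * c⁻¹) = D * c⁻¹ := by rw [hu]; group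
        rwa [e] at h1
      have hDs : D * s⁻¹ ∈ S.M := by
        have h1 := S.M.mul_mem hDu hus
        have e : D * u⁻¹ * (u * s⁻¹) = D * s⁻¹ := by group
        rwa [e] at h1
      set g := S.gcd (D * c⁻¹) (D * s⁻¹) with hg
      set q := g⁻¹ * D with hqdef
      have ha'_mem : q * c⁻¹ ∈ S.M := by
        have h1 := S.gcd_dvd_left (D * c⁻¹) (D * s⁻¹)
        have e : g⁻¹ * (D * c⁻¹) = q * c⁻¹ := by rw [hqdef]; group
        rwa [← hg, e] at h1
      have hb'_mem : q * s⁻¹ ∈ S.M := by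
        have h1 := S.gcd_dvd_right (D * c⁻¹) (D * s⁻¹)
        have e : g⁻¹ * (D * s⁻¹) = q * s⁻¹ := by rw [hqdef]; group
        rwa [← hg, e] at h1
      have huq : u * q⁻¹ ∈ S.M := by
        have h1 : (D * u⁻¹)⁻¹ * (D * c⁻¹) ∈ S.M := by
          have e : (D * u⁻¹)⁻¹ * (D * c⁻¹) = L.prod * s * c⁻¹ := by rw [hu]; group
          rw [e]; exact hpc
        have h2 : (D * u⁻¹)⁻¹ * (D * s⁻¹) ∈ S.M := by
          have e : (D * u⁻¹)⁻¹ * (D * s⁻¹) = u * s⁻¹ := by group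
          rw [e]; exact hus
        have h3 := S.gcd_greatest (D * c⁻¹) (D * s⁻¹) (D * u⁻¹) h1 h2
        have e : (D * u⁻¹)⁻¹ * S.gcd (D * c⁻¹) (D * s⁻¹) = u * q⁻¹ := by
          rw [hqdef, ← hg]; group
        rwa [e] at h3
      have ha'_simple : S.Simple (q * c⁻¹) := by
        apply S.simple_of_right_div ha'_mem
        have h1 : (D * (S.δ * c)⁻¹)⁻¹ * (D * c⁻¹) ∈ S.M := by
          have e : (D * (S.δ * c)⁻¹)⁻¹ * (D * c⁻¹) = S.δ := by group
          rw [e]; exact S.δ_mem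
        have h2 : (D * (S.δ * c)⁻¹)⁻¹ * (D * s⁻¹) ∈ S.M := by
          have e : (D * (S.δ * c)⁻¹)⁻¹ * (D * s⁻¹) = (S.δ * c * S.δ⁻¹) * (S.δ * s⁻¹) := by
            group
          rw [e]
          exact S.M.mul_mem (S.tauInv_mem hc) (S.delta_mul_inv_mem_of_simple hs)
        have h3 := S.gcd_greatest (D * c⁻¹) (D * s⁻¹) (D * (S.δ * c)⁻¹) h1 h2
        have e : (D * (S.δ * c)⁻¹)⁻¹ * S.gcd (D * c⁻¹) (D * s⁻¹)
            = S.δ * (q * c⁻¹)⁻¹ := by rw [hqdef, ← hg]; group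
        rwa [e] at h3
      have hLb : L.prod * (q * s⁻¹)⁻¹ ∈ S.M := by
        have e : L.prod * (q * s⁻¹)⁻¹ = u * q⁻¹ := by rw [hu]; group
        rw [e]; exact huq
      obtain ⟨L', hL', hlen', hprod'⟩ := ih (fun t ht => hL t (by simp [ht]))
        (q * s⁻¹) hb'_mem hLb
      refine ⟨L' ++ [q * c⁻¹], ?_, by simp [hlen'], ?_⟩
      · intro t ht
        rcases List.mem_append.mp ht with h | h
        · exact hL' t h
        · rw [List.mem_singleton.mp h]; exact ha'_simple
      · rw [List.prod_append, hprod']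
        simp only [List.prod_cons, List.prod_nil, mul_one]
        rw [hu]
        group

lemma SD_of_dvd_pow {m : ℕ} {u : G} (hu : u ∈ S.M) (h : u⁻¹ * S.δ ^ m ∈ S.M) : S.SD m u := by
  have hrep : ∀ t ∈ List.replicate m S.δ, S.Simple t := by
    intro t ht
    rw [List.mem_replicate] at ht
    rw [ht.2]; exact S.simple_delta
  have h2 := S.SD_divRight (List.replicate m S.δ) hrep (u⁻¹ * S.δ ^ m)
    h (by
      rw [List.prod_replicate]
      have e : S.δ ^ m * (u⁻¹ * S.δ ^ m)⁻¹ = u := by group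
      rw [e]; exact hu)
  rw [List.prod_replicate] at h2
  have e : S.δ ^ m * (u⁻¹ * S.δ ^ m)⁻¹ = u := by group
  rw [e] at h2
  simpa using h2

/-- The strip lemma: if `u` divides `δ^(m+1)` then stripping its head
`δ ∧ u` leaves a divisor of `δ^m`. -/
lemma strip {m : ℕ} {u : G} (hu : u ∈ S.M) (h : u⁻¹ * S.δ ^ (m + 1) ∈ S.M) :
    (S.gcd S.δ u)⁻¹ * u ∈ S.M ∧ ((S.gcd S.δ u)⁻¹ * u)⁻¹ * S.δ ^ m ∈ S.M := by
  have hc_mem : S.gcd S.δ u ∈ S.M := S.gcd_mem S.δ_mem hu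
  have hcu : (S.gcd S.δ u)⁻¹ * u ∈ S.M := S.gcd_dvd_right S.δ u
  refine ⟨hcu, ?_⟩
  obtain ⟨L, hL, hlen, hprod⟩ := S.SD_of_dvd_pow hu h
  rcases L with _ | ⟨s, L⟩
  · simp at hlen
  · simp only [List.length_cons, Nat.succ_inj] at hlen
    have hs : S.Simple s := hL s (by simp)
    have hw : L.prod ∈ S.M := Submonoid.list_prod_mem _ (fun t ht => (hL t (by simp [ht])).1)
    have hsc : s⁻¹ * S.gcd S.δ u ∈ S.M := by
      apply S.gcd_greatest
      · exact hs.2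
      · rw [← hprod]
        simp only [List.prod_cons]
        have e : s⁻¹ * (s * L.prod) = L.prod := by group
        rw [e]; exact hw
    have hcw : (s⁻¹ * S.gcd S.δ u)⁻¹ * L.prod ∈ S.M := by
      have e : (s⁻¹ * S.gcd S.δ u)⁻¹ * L.prod = (S.gcd S.δ u)⁻¹ * u := by
        rw [← hprod]; simp only [List.prod_cons]; group
      rw [e]; exact hcu
    have hsd := S.SD_div L (fun t ht => hL t (by simp [ht])) (s⁻¹ * S.gcd S.δ u) hsc hcw
    rw [hlen] at hsd
    have h2 := S.SD_dvd_pow hsd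
    have e : ((s⁻¹ * S.gcd S.δ u)⁻¹ * L.prod)⁻¹ * S.δ ^ m
        = ((S.gcd S.δ u)⁻¹ * u)⁻¹ * S.δ ^ m := by
      rw [← hprod]
      simp only [List.prod_cons]
      group
    rwa [e] at h2

/-- The set of products of `m` simples is finite. -/
lemma SD_finite (m : ℕ) : {u : G | S.SD m u}.Finite := by
  induction m with
  | zero =>
      apply Set.Finite.subset (Set.finite_singleton (1 : G))
      rintro u ⟨L, _, hlen, hprod⟩
      rw [List.length_eq_zero_iff] at hlen
      subst hlen
      simp at hprod
      simp [← hprod]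
  | succ m ih =>
      apply Set.Finite.subset
        (Set.Finite.image2 (fun a b => a * b) S.divs_finite ih)
      rintro u ⟨L, hL, hlen, hprod⟩
      rcases L with _ | ⟨s, L⟩
      · simp at hlen
      · simp only [List.length_cons, Nat.succ_inj] at hlen
        have hs := hL s (by simp)
        refine Set.mem_image2.mpr ⟨s, ⟨hs.1, hs.2⟩, L.prod, ⟨L, fun t ht => hL t (by simp [ht]), hlen, rfl⟩, ?_⟩
        rw [← hprod]
        simp

/-! ### Centrality of a power of δ, bounds, existence of inf and sup -/

lemma tauPow_mem_nat (n : ℕ) {m : G} (hm : m ∈ S.M) : (S.δ ^ n)⁻¹ * m * S.δ ^ n ∈ S.M := by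
  have := S.tauPow_mem (n : ℤ) hm
  rwa [zpow_natCast] at this

lemma tauInvPow_mem_nat (n : ℕ) {m : G} (hm : m ∈ S.M) : S.δ ^ n * m * (S.δ ^ n)⁻¹ ∈ S.M := by
  have := S.tauPow_mem (-(n : ℤ)) hm
  have e : (S.δ ^ (-(n : ℤ)))⁻¹ * m * S.δ ^ (-(n : ℤ)) = S.δ ^ n * m * (S.δ ^ n)⁻¹ := by
    rw [zpow_neg, zpow_natCast]; group
  rwa [e] at this

lemma exists_dvd_pow {m : G} (hm : m ∈ S.M) : ∃ n : ℕ, m⁻¹ * S.δ ^ n ∈ S.M := by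
  have hm' : m ∈ Submonoid.closure {x : G | x ∈ S.M ∧ x⁻¹ * S.δ ∈ S.M} := by
    rw [S.divs_generate]; exact hm
  clear hm
  induction hm' using Submonoid.closure_induction with
  | mem s hs => exact ⟨1, by simpa using hs.2⟩
  | one => exact ⟨0, by simpa using S.M.one_mem⟩
  | mul a b _ _ ha hb =>
      obtain ⟨n₁, h₁⟩ := ha
      obtain ⟨n₂, h₂⟩ := hb
      refine ⟨n₁ + n₂, ?_⟩
      have hmul := S.M.mul_mem h₂ (S.tauPow_mem_nat n₂ h₁)
      have e : b⁻¹ * S.δ ^ n₂ * ((S.δ ^ n₂)⁻¹ * (a⁻¹ * S.δ ^ n₁) * S.δ ^ n₂)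
          = (a * b)⁻¹ * S.δ ^ (n₁ + n₂) := by
        rw [pow_add]; group
      rwa [e] at hmul

lemma exists_central_pow : ∃ e : ℕ, 0 < e ∧ ∀ g : G, S.δ ^ e * g = g * S.δ ^ e := by
  classical
  haveI : Finite {x : G | x ∈ S.M ∧ x⁻¹ * S.δ ∈ S.M} := S.divs_finite.to_subtype
  set Dset := {x : G | x ∈ S.M ∧ x⁻¹ * S.δ ∈ S.M} with hD
  have hmap : ∀ x : G, x ∈ Dset → S.δ⁻¹ * x * S.δ ∈ Dset := by
    intro x hx
    have := S.simple_tau (s := x) ⟨hx.1, hx.2⟩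
    exact ⟨this.1, this.2⟩
  set f : Dset → Dset := fun x => ⟨S.δ⁻¹ * x.1 * S.δ, hmap x.1 x.2⟩ with hf
  have hinj : Function.Injective f := by
    intro a b hab
    apply Subtype.ext
    have h1 : S.δ⁻¹ * a.1 * S.δ = S.δ⁻¹ * b.1 * S.δ := congrArg Subtype.val hab
    have h2 := mul_right_cancel h1
    exact mul_left_cancel h2
  obtain ⟨i, j, hne, heq⟩ := Finite.exists_ne_map_eq_of_infinite (fun n : ℕ => f^[n])
  -- wlog i < j
  obtain ⟨i, j, hij, heq⟩ : ∃ i j : ℕ, i < j ∧ f^[i] = f^[j] := by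
    rcases lt_or_gt_of_ne hne with h | h
    · exact ⟨i, j, h, heq⟩
    · exact ⟨j, i, h, heq.symm⟩
  set e := j - i with he
  have hepos : 0 < e := by omega
  have hid : ∀ x : Dset, f^[e] x = x := by
    intro x
    have h1 : f^[i] (f^[e] x) = f^[i] x := by
      rw [← Function.iterate_add_apply]
      have : i + e = j := by omega
      rw [this, ← heq]
    exact Function.Injective.iterate hinj i h1
  have hval : ∀ (n : ℕ) (x : Dset), (f^[n] x).1 = (S.δ ^ n)⁻¹ * x.1 * S.δ ^ n := by
    intro n
    induction n with
    | zero => intro x; simp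
    | succ n ih =>
        intro x
        rw [Function.iterate_succ_apply']
        show S.δ⁻¹ * (f^[n] x).1 * S.δ = _
        rw [ih x, pow_succ]
        group
  have hsimple : ∀ s : G, s ∈ Dset → S.δ ^ e * s = s * S.δ ^ e := by
    intro s hs
    have h1 := congrArg Subtype.val (hid ⟨s, hs⟩)
    rw [hval e ⟨s, hs⟩] at h1
    have h2 : (S.δ ^ e)⁻¹ * s * S.δ ^ e = s := h1
    have h3 : S.δ ^ e * ((S.δ ^ e)⁻¹ * s * S.δ ^ e) = s * S.δ ^ e := by group
    rw [h2] at h3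
    exact h3
  have hM : ∀ m : G, m ∈ S.M → S.δ ^ e * m = m * S.δ ^ e := by
    intro m hm
    have hm' : m ∈ Submonoid.closure Dset := by rw [hD, S.divs_generate]; exact hm
    clear hm
    induction hm' using Submonoid.closure_induction with
    | mem s hs => exact hsimple s hs
    | one => simp
    | mul a b _ _ ha hb =>
        calc S.δ ^ e * (a * b) = S.δ ^ e * a * b := by group
        _ = a * S.δ ^ e * b := by rw [ha]
        _ = a * (S.δ ^ e * b) := by group
        _ = a * (b * S.δ ^ e) := by rw [hb]
        _ = a * b * S.δ ^ e := by group
  refine ⟨e, hepos, ?_⟩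
  intro g
  obtain ⟨a, ha, b, hb, rfl⟩ := S.fractions g
  have h1 := hM a ha
  have h2 := hM b hb
  have h3 : S.δ ^ e * a⁻¹ = a⁻¹ * S.δ ^ e := by
    calc S.δ ^ e * a⁻¹ = a⁻¹ * (a * S.δ ^ e) * a⁻¹ := by group
    _ = a⁻¹ * (S.δ ^ e * a) * a⁻¹ := by rw [h1]
    _ = a⁻¹ * S.δ ^ e := by group
  calc S.δ ^ e * (a⁻¹ * b) = S.δ ^ e * a⁻¹ * b := by group
  _ = a⁻¹ * S.δ ^ e * b := by rw [h3]
  _ = a⁻¹ * (S.δ ^ e * b) := by group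
  _ = a⁻¹ * (b * S.δ ^ e) := by rw [h2]
  _ = a⁻¹ * b * S.δ ^ e := by group

lemma le_of_pow_dvd_pow (hex : ∃ w : G, ∃ k₀ : ℤ, S.IsInf w k₀) {i j : ℤ}
    (h : (S.δ ^ i)⁻¹ * S.δ ^ j ∈ S.M) : i ≤ j := by
  by_contra hlt
  push_neg at hlt
  obtain ⟨w, k₀, hw⟩ := hex
  have hneg : S.δ ^ (j - i) ∈ S.M := by
    have e : (S.δ ^ i)⁻¹ * S.δ ^ j = S.δ ^ (j - i) := by
      rw [← zpow_neg, ← zpow_add]; congr 1; ring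
    rwa [e] at h
  set d : ℤ := i - j with hd
  have hdpos : 0 < d := by omega
  have hall : ∀ t : ℤ, S.δ ^ t ∈ S.M := by
    intro t
    set n : ℕ := t.natAbs with hn
    have hnn : 0 ≤ t + d * n := by
      have h1 : -t ≤ (n : ℤ) := by
        have := Int.natAbs_eq t
        omega
      have h3 : (n : ℤ) ≤ d * n := le_mul_of_one_le_left (by positivity) (by omega)
      linarith
    have hsplit : S.δ ^ t = S.δ ^ (t + d * n) * (S.δ ^ (j - i)) ^ n := by
      have e1 : (S.δ ^ (j - i)) ^ n = S.δ ^ ((j - i) * n) := by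
        rw [← zpow_natCast (S.δ ^ (j - i)) n, ← zpow_mul]
      rw [e1, ← zpow_add]
      congr 1
      have : j - i = -d := by omega
      rw [this]; ring
    rw [hsplit]
    exact S.M.mul_mem (S.zpow_mem_of_nonneg hnn) (pow_mem hneg n)
  have habs := hw.2 (k₀ + 1) (by
    have h1 := S.M.mul_mem (hall (-1)) hw.1
    have e : S.δ ^ (-1 : ℤ) * ((S.δ ^ k₀)⁻¹ * w) = (S.δ ^ (k₀ + 1))⁻¹ * w := by
      rw [zpow_add_one, zpow_neg, zpow_one]; group
    rwa [e] at h1)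
  omega

lemma exists_lower (g : G) : ∃ n : ℤ, (S.δ ^ n)⁻¹ * g ∈ S.M := by
  obtain ⟨a, ha, b, hb, rfl⟩ := S.fractions g
  obtain ⟨n₁, h₁⟩ := S.exists_dvd_pow ha
  refine ⟨-(n₁ : ℤ), ?_⟩
  have h2 := S.M.mul_mem (S.tauInvPow_mem_nat n₁ h₁) hb
  have e : S.δ ^ n₁ * (a⁻¹ * S.δ ^ n₁) * (S.δ ^ n₁)⁻¹ * b
      = (S.δ ^ (-(n₁ : ℤ)))⁻¹ * (a⁻¹ * b) := by
    rw [zpow_neg, zpow_natCast]; group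
  rwa [e] at h2

lemma exists_upper (g : G) : ∃ n : ℤ, g⁻¹ * S.δ ^ n ∈ S.M := by
  obtain ⟨a, ha, b, hb, rfl⟩ := S.fractions g
  obtain ⟨n₂, h₂⟩ := S.exists_dvd_pow hb
  refine ⟨(n₂ : ℤ), ?_⟩
  have h3 := S.M.mul_mem h₂ (S.tauPow_mem_nat n₂ ha)
  have e : b⁻¹ * S.δ ^ n₂ * ((S.δ ^ n₂)⁻¹ * a * S.δ ^ n₂)
      = (a⁻¹ * b)⁻¹ * S.δ ^ ((n₂ : ℤ)) := by
    rw [zpow_natCast]; group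
  rwa [e] at h3

lemma exists_isInf (hex : ∃ w : G, ∃ k₀ : ℤ, S.IsInf w k₀) (g : G) :
    ∃ k : ℤ, S.IsInf g k := by
  obtain ⟨nu, hnu⟩ := S.exists_upper g
  have hbdd : ∃ b : ℤ, ∀ z : ℤ, (S.δ ^ z)⁻¹ * g ∈ S.M → z ≤ b := by
    refine ⟨nu, fun z hz => ?_⟩
    apply S.le_of_pow_dvd_pow hex
    have := S.M.mul_mem hz hnu
    have e : (S.δ ^ z)⁻¹ * g * (g⁻¹ * S.δ ^ nu) = (S.δ ^ z)⁻¹ * S.δ ^ nu := by group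
    rwa [e] at this
  obtain ⟨k, hk, hmax⟩ := Int.exists_greatest_of_bdd hbdd (S.exists_lower g)
  exact ⟨k, hk, hmax⟩

lemma exists_isSup (hex : ∃ w : G, ∃ k₀ : ℤ, S.IsInf w k₀) (g : G) :
    ∃ s : ℤ, S.IsSup g s := by
  obtain ⟨nl, hnl⟩ := S.exists_lower g
  have hbdd : ∃ b : ℤ, ∀ z : ℤ, g⁻¹ * S.δ ^ z ∈ S.M → b ≤ z := by
    refine ⟨nl, fun z hz => ?_⟩
    apply S.le_of_pow_dvd_pow hex
    have := S.M.mul_mem hnl hz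
    have e : (S.δ ^ nl)⁻¹ * g * (g⁻¹ * S.δ ^ z) = (S.δ ^ nl)⁻¹ * S.δ ^ z := by group
    rwa [e] at this
  obtain ⟨s, hs, hmin⟩ := Int.exists_least_of_bdd hbdd (S.exists_upper g)
  exact ⟨s, hs, hmin⟩

/-! ### Conjugation helpers -/

/-- Conjugation `a ↦ u⁻¹ a u`. -/
def cj (a u : G) : G := u⁻¹ * a * u

lemma cj_def (a u : G) : cj a u = u⁻¹ * a * u := rfl

lemma cj_cj (a u v : G) : cj (cj a u) v = cj a (u * v) := by
  simp only [cj]; group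

lemma cj_one (a : G) : cj a 1 = a := by simp [cj]

lemma isConj_cj (a u : G) : IsConj a (cj a u) := by
  rw [isConj_iff]
  exact ⟨u⁻¹, by simp only [cj, inv_inv]⟩

/-! ### The super-summit predicate with prescribed inf and sup -/

/-- `w` is conjugate to `x` with infimum `k` and supremum `s`. -/
def Gd (x : G) (k s : ℤ) (w : G) : Prop :=
  IsConj x w ∧ S.IsInf w k ∧ S.IsSup w s

/-- Context: `k` (resp. `s`) is the maximal infimum (resp. minimal supremum)
over the conjugacy class of `x`, and some element has an infimum. -/
structure Ctx (S : Garside G) (x : G) (k s : ℤ) : Prop where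
  maxInf : ∀ w : G, IsConj x w → ∀ k' : ℤ, S.IsInf w k' → k' ≤ k
  minSup : ∀ w : G, IsConj x w → ∀ s' : ℤ, S.IsSup w s' → s ≤ s'
  hex : ∃ w : G, ∃ k₀ : ℤ, S.IsInf w k₀

lemma mk_Gd {x : G} {k s : ℤ} (C : Ctx S x k s) {w : G} (hconj : IsConj x w)
    (hlow : (S.δ ^ k)⁻¹ * w ∈ S.M) (hup : w⁻¹ * S.δ ^ s ∈ S.M) : S.Gd x k s w := by
  obtain ⟨k', hk'⟩ := S.exists_isInf C.hex w
  have hkk : k' = k := le_antisymm (C.maxInf w hconj k' hk') (hk'.2 k hlow)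
  obtain ⟨s', hs'⟩ := S.exists_isSup C.hex w
  have hss : s' = s := le_antisymm (hs'.2 s hup) (C.minSup w hconj s' hs')
  exact ⟨hconj, hkk ▸ hk', hss ▸ hs'⟩

lemma Gd_to_InSS {x : G} {k s : ℤ} (C : Ctx S x k s) {w : G} (h : S.Gd x k s w) :
    S.InSS x w :=
  ⟨h.1, ⟨k, h.2.1, C.maxInf⟩, ⟨s, h.2.2, C.minSup⟩⟩

lemma InSS_to_Gd {x : G} {k s : ℤ} (C : Ctx S x k s)
    (wit : ∃ w₀ : G, IsConj x w₀ ∧ S.IsInf w₀ k ∧ S.IsSup w₀ s)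
    {w : G} (h : S.InSS x w) : S.Gd x k s w := by
  obtain ⟨hconj, ⟨k', hk', hmax'⟩, ⟨s', hs', hmin'⟩⟩ := h
  obtain ⟨w₀, hw₀c, hw₀i, hw₀s⟩ := wit
  have hkk : k' = k := le_antisymm (C.maxInf w hconj k' hk') (hmax' w₀ hw₀c k hw₀i)
  have hss : s' = s := le_antisymm (hmin' w₀ hw₀c s hw₀s) (C.minSup w hconj s' hs')
  exact ⟨hconj, hkk ▸ hk', hss ▸ hs'⟩

lemma Gd_cj_zpow {x : G} {k s : ℤ} (C : Ctx S x k s) {w : G} (h : S.Gd x k s w) (j : ℤ) :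
    S.Gd x k s (cj w (S.δ ^ j)) := by
  apply S.mk_Gd C (h.1.trans (isConj_cj w (S.δ ^ j)))
  · have h1 := S.tauPow_mem j h.2.1.1
    have e : (S.δ ^ j)⁻¹ * ((S.δ ^ k)⁻¹ * w) * S.δ ^ j = (S.δ ^ k)⁻¹ * cj w (S.δ ^ j) := by
      simp only [cj]; group
    rwa [e] at h1
  · have h1 := S.tauPow_mem j h.2.2.1
    have e : (S.δ ^ j)⁻¹ * (w⁻¹ * S.δ ^ s) * S.δ ^ j = (cj w (S.δ ^ j))⁻¹ * S.δ ^ s := by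
      simp only [cj]; group
    rwa [e] at h1

/-! ### Cycling -/

/-- The conjugating element realizing cycling: `cyc w = w ^ (Pc k w)`. -/
def Pc (k : ℤ) (w : G) : G := S.δ ^ k * S.gcd S.δ ((S.δ ^ k)⁻¹ * w) * (S.δ ^ k)⁻¹

lemma cyc_eq {k : ℤ} {w : G} (h : S.IsInf w k) : S.cyc w = cj w (S.Pc k w) :=
  S.cyc_spec w k ⟨h.1, h.2⟩

lemma Pc_mul (k : ℤ) (w : G) : S.Pc k w * S.δ ^ k = S.gcd (S.δ ^ (k + 1)) w := by
  have e : S.Pc k w * S.δ ^ k = S.δ ^ k * S.gcd S.δ ((S.δ ^ k)⁻¹ * w) := by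
    simp only [Pc]; group
  rw [e, ← S.gcd_mul_left]
  congr 1
  · rw [← zpow_add_one]
  · group

lemma Pc_simple {k : ℤ} {w : G} (h : S.IsInf w k) : S.Simple (S.Pc k w) := by
  have hA : S.Simple (S.gcd S.δ ((S.δ ^ k)⁻¹ * w)) :=
    ⟨S.gcd_mem S.δ_mem h.1, S.gcd_dvd_left _ _⟩
  have := S.simple_tauPow (-k) hA
  have e : (S.δ ^ (-k))⁻¹ * S.gcd S.δ ((S.δ ^ k)⁻¹ * w) * S.δ ^ (-k) = S.Pc k w := by
    simp only [Pc, zpow_neg]; group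
  rwa [e] at this

lemma Pc_mem {k : ℤ} {w : G} (h : S.IsInf w k) : S.Pc k w ∈ S.M := (S.Pc_simple h).1

lemma Gd_cyc {x : G} {k s : ℤ} (C : Ctx S x k s) {w : G} (h : S.Gd x k s w) :
    S.Gd x k s (S.cyc w) ∧ S.cyc w = cj w (S.Pc k w) := by
  have hcyc : S.cyc w = cj w (S.Pc k w) := S.cyc_eq h.2.1
  have hP := S.Pc_mem h.2.1
  refine ⟨?_, hcyc⟩
  rw [hcyc]
  apply S.mk_Gd C (h.1.trans (isConj_cj w (S.Pc k w)))
  · -- infimum is preserved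
    have h1 : S.dvd (S.gcd (S.δ ^ (k + 1)) w) (w * S.Pc k w) :=
      S.dvd_trans (S.gcd_dvd_right' _ _) (S.dvd_mul_right hP)
    rw [← S.Pc_mul] at h1
    have e : (S.Pc k w * S.δ ^ k)⁻¹ * (w * S.Pc k w) = (S.δ ^ k)⁻¹ * cj w (S.Pc k w) := by
      simp only [cj]; group
    rw [← e]; exact h1
  · -- supremum is preserved
    have hks : k ≤ s := by
      apply S.le_of_pow_dvd_pow C.hex
      have := S.M.mul_mem h.2.1.1 h.2.2.1
      have e : (S.δ ^ k)⁻¹ * w * (w⁻¹ * S.δ ^ s) = (S.δ ^ k)⁻¹ * S.δ ^ s := by group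
      rwa [e] at this
    rcases eq_or_lt_of_le hks with heq | hlt
    · -- degenerate case: w = δ^k and the cycling conjugator is trivial
      have hww : w = S.δ ^ k := by
        apply (S.dvd_antisymm (a := S.δ ^ k) (b := w) h.2.1.1 ?_).symm
        show w⁻¹ * S.δ ^ k ∈ S.M
        rw [heq]; exact h.2.2.1
      have hA1 : S.gcd S.δ ((S.δ ^ k)⁻¹ * w) = 1 := by
        rw [hww]
        simp only [inv_mul_cancel]
        exact S.gcd_one_right_of_mem S.δ_mem
      have hP1 : S.Pc k w = 1 := by
        simp only [Pc, hA1]; group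
      rw [hP1, cj_one]
      exact h.2.2.1
    · -- main case k < s
      have h1 : S.dvd (S.Pc k w) (w⁻¹ * S.δ ^ (s + 1)) := by
        apply S.dvd_trans (S.Pc_simple h.2.1).2
        have h2 := S.tau_mem h.2.2.1
        have e : S.δ⁻¹ * (w⁻¹ * S.δ ^ s) * S.δ = S.δ⁻¹ * (w⁻¹ * S.δ ^ (s + 1)) := by
          rw [zpow_add_one]; group
        show S.δ⁻¹ * (w⁻¹ * S.δ ^ (s + 1)) ∈ S.M
        rw [← e]; exact h2
      have h2 : S.dvd (S.Pc k w) (S.δ ^ (s - k)) := by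
        apply S.dvd_trans (S.Pc_simple h.2.1).2
        show S.δ⁻¹ * S.δ ^ (s - k) ∈ S.M
        have e : S.δ⁻¹ * S.δ ^ (s - k) = S.δ ^ (s - k - 1) := by
          rw [← zpow_neg_one, ← zpow_add]; congr 1; ring
        rw [e]
        exact S.zpow_mem_of_nonneg (by omega)
      have h3 := S.dvd_gcd h1 h2
      have claim : S.gcd (w⁻¹ * S.δ ^ (s + 1)) (S.δ ^ (s - k)) = w⁻¹ * S.Pc k w * S.δ ^ s := by
        have e1 : w⁻¹ * S.Pc k w * S.δ ^ s = w⁻¹ * S.gcd (S.δ ^ (k + 1)) w * S.δ ^ (s - k) := by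
          rw [← S.Pc_mul]; group
        have e2 : w⁻¹ * S.gcd (S.δ ^ (k + 1)) w = S.gcd (w⁻¹ * S.δ ^ (k + 1)) (w⁻¹ * w) :=
          (S.gcd_mul_left w⁻¹ _ _).symm
        have e3 := S.gcd_mul_zpow (w⁻¹ * S.δ ^ (k + 1)) (w⁻¹ * w) (s - k)
        have e4 : w⁻¹ * S.δ ^ (k + 1) * S.δ ^ (s - k) = w⁻¹ * S.δ ^ (s + 1) := by
          rw [mul_assoc, ← zpow_add]
          congr 2
          ring
        have e5 : w⁻¹ * w * S.δ ^ (s - k) = S.δ ^ (s - k) := by group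
        rw [e1, e2, e3, e4, e5]
      rw [claim] at h3
      have e : (cj w (S.Pc k w))⁻¹ * S.δ ^ s = (S.Pc k w)⁻¹ * (w⁻¹ * S.Pc k w * S.δ ^ s) := by
        simp only [cj]; group
      rw [e]; exact h3

/-! ### Convexity of the super summit set (Franco–González-Meneses) -/

lemma Gd_gcd {x : G} {k s : ℤ} (C : Ctx S x k s) {w u v : G} (h : S.Gd x k s w)
    (hu : u ∈ S.M) (hv : v ∈ S.M)
    (hgu : S.Gd x k s (cj w u)) (hgv : S.Gd x k s (cj w v)) :
    S.gcd u v ∈ S.M ∧ S.Gd x k s (cj w (S.gcd u v)) := by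
  have hg_mem : S.gcd u v ∈ S.M := S.gcd_mem hu hv
  refine ⟨hg_mem, ?_⟩
  apply S.mk_Gd C (h.1.trans (isConj_cj w _))
  · -- infimum
    have h1 : S.dvd (S.gcd u v * S.δ ^ k) (w * u) := by
      apply S.dvd_trans (S.dvd_mul_zpow k (S.gcd_dvd_left' u v))
      have h2 := hgu.2.1.1
      have e : (u * S.δ ^ k)⁻¹ * (w * u) = (S.δ ^ k)⁻¹ * cj w u := by
        simp only [cj]; group
      show (u * S.δ ^ k)⁻¹ * (w * u) ∈ S.M
      rw [e]; exact h2
    have h2 : S.dvd (S.gcd u v * S.δ ^ k) (w * v) := by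
      apply S.dvd_trans (S.dvd_mul_zpow k (S.gcd_dvd_right' u v))
      have h3 := hgv.2.1.1
      have e : (v * S.δ ^ k)⁻¹ * (w * v) = (S.δ ^ k)⁻¹ * cj w v := by
        simp only [cj]; group
      show (v * S.δ ^ k)⁻¹ * (w * v) ∈ S.M
      rw [e]; exact h3
    have h3 := S.dvd_gcd h1 h2
    rw [S.gcd_mul_left w u v] at h3
    have e : (S.gcd u v * S.δ ^ k)⁻¹ * (w * S.gcd u v) = (S.δ ^ k)⁻¹ * cj w (S.gcd u v) := by
      simp only [cj]; group
    rw [← e]; exact h3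
  · -- supremum
    have h1 : S.dvd (S.gcd u v) (w⁻¹ * (u * S.δ ^ s)) := by
      have h2 := S.M.mul_mem (S.gcd_dvd_left u v) hgu.2.2.1
      have e : (S.gcd u v)⁻¹ * u * ((cj w u)⁻¹ * S.δ ^ s)
          = (S.gcd u v)⁻¹ * (w⁻¹ * (u * S.δ ^ s)) := by
        simp only [cj]; group
      show (S.gcd u v)⁻¹ * (w⁻¹ * (u * S.δ ^ s)) ∈ S.M
      rw [← e]; exact h2
    have h2 : S.dvd (S.gcd u v) (w⁻¹ * (v * S.δ ^ s)) := by
      have h3 := S.M.mul_mem (S.gcd_dvd_right u v) hgv.2.2.1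
      have e : (S.gcd u v)⁻¹ * v * ((cj w v)⁻¹ * S.δ ^ s)
          = (S.gcd u v)⁻¹ * (w⁻¹ * (v * S.δ ^ s)) := by
        simp only [cj]; group
      show (S.gcd u v)⁻¹ * (w⁻¹ * (v * S.δ ^ s)) ∈ S.M
      rw [← e]; exact h3
    have h3 := S.dvd_gcd h1 h2
    rw [S.gcd_mul_left w⁻¹ _ _] at h3
    have e6 : S.gcd (u * S.δ ^ s) (v * S.δ ^ s) = S.gcd u v * S.δ ^ s :=
      (S.gcd_mul_zpow u v s).symm
    rw [e6] at h3
    have e : (cj w (S.gcd u v))⁻¹ * S.δ ^ s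
        = (S.gcd u v)⁻¹ * (w⁻¹ * (S.gcd u v * S.δ ^ s)) := by
      simp only [cj]; group
    rw [e]; exact h3

/-! ### Transport -/

/-- Transport of a conjugator `u` along cycling of `y`. -/
def Tst (k : ℤ) (y u : G) : G := (S.Pc k y)⁻¹ * u * S.Pc k (u⁻¹ * y * u)

lemma gcd_conj_zpow (j : ℤ) (a b : G) :
    S.gcd ((S.δ ^ j)⁻¹ * a * S.δ ^ j) ((S.δ ^ j)⁻¹ * b * S.δ ^ j)
      = (S.δ ^ j)⁻¹ * S.gcd a b * S.δ ^ j := by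
  apply S.gcd_eq_of
  · have h1 := S.tauPow_mem j (S.gcd_dvd_left a b)
    have e : (S.δ ^ j)⁻¹ * ((S.gcd a b)⁻¹ * a) * S.δ ^ j
        = ((S.δ ^ j)⁻¹ * S.gcd a b * S.δ ^ j)⁻¹ * ((S.δ ^ j)⁻¹ * a * S.δ ^ j) := by group
    show ((S.δ ^ j)⁻¹ * S.gcd a b * S.δ ^ j)⁻¹ * ((S.δ ^ j)⁻¹ * a * S.δ ^ j) ∈ S.M
    rw [← e]; exact h1
  · have h1 := S.tauPow_mem j (S.gcd_dvd_right a b)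
    have e : (S.δ ^ j)⁻¹ * ((S.gcd a b)⁻¹ * b) * S.δ ^ j
        = ((S.δ ^ j)⁻¹ * S.gcd a b * S.δ ^ j)⁻¹ * ((S.δ ^ j)⁻¹ * b * S.δ ^ j) := by group
    show ((S.δ ^ j)⁻¹ * S.gcd a b * S.δ ^ j)⁻¹ * ((S.δ ^ j)⁻¹ * b * S.δ ^ j) ∈ S.M
    rw [← e]; exact h1
  · intro t ht1 ht2
    have h1 : S.dvd (S.δ ^ j * t * (S.δ ^ j)⁻¹) a := by
      have := S.tauPow_mem (-j) ht1
      have e : (S.δ ^ (-j))⁻¹ * (t⁻¹ * ((S.δ ^ j)⁻¹ * a * S.δ ^ j)) * S.δ ^ (-j)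
          = (S.δ ^ j * t * (S.δ ^ j)⁻¹)⁻¹ * a := by
        rw [zpow_neg]; group
      show (S.δ ^ j * t * (S.δ ^ j)⁻¹)⁻¹ * a ∈ S.M
      rw [← e]; exact this
    have h2 : S.dvd (S.δ ^ j * t * (S.δ ^ j)⁻¹) b := by
      have := S.tauPow_mem (-j) ht2
      have e : (S.δ ^ (-j))⁻¹ * (t⁻¹ * ((S.δ ^ j)⁻¹ * b * S.δ ^ j)) * S.δ ^ (-j)
          = (S.δ ^ j * t * (S.δ ^ j)⁻¹)⁻¹ * b := by
        rw [zpow_neg]; group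
      show (S.δ ^ j * t * (S.δ ^ j)⁻¹)⁻¹ * b ∈ S.M
      rw [← e]; exact this
    have h3 := S.dvd_gcd h1 h2
    have := S.tauPow_mem j h3
    have e : (S.δ ^ j)⁻¹ * ((S.δ ^ j * t * (S.δ ^ j)⁻¹)⁻¹ * S.gcd a b) * S.δ ^ j
        = t⁻¹ * ((S.δ ^ j)⁻¹ * S.gcd a b * S.δ ^ j) := by group
    show t⁻¹ * ((S.δ ^ j)⁻¹ * S.gcd a b * S.δ ^ j) ∈ S.M
    rw [← e]; exact this

lemma Pc_conj (k j : ℤ) (y : G) :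
    S.Pc k ((S.δ ^ j)⁻¹ * y * S.δ ^ j) = (S.δ ^ j)⁻¹ * S.Pc k y * S.δ ^ j := by
  have e1 : (S.δ ^ k)⁻¹ * ((S.δ ^ j)⁻¹ * y * S.δ ^ j)
      = (S.δ ^ j)⁻¹ * ((S.δ ^ k)⁻¹ * y) * S.δ ^ j := by group
  have e2 : (S.δ ^ j)⁻¹ * S.δ * S.δ ^ j = S.δ := by group
  have h := S.gcd_conj_zpow j S.δ ((S.δ ^ k)⁻¹ * y)
  rw [e2] at h
  show S.δ ^ k * S.gcd S.δ ((S.δ ^ k)⁻¹ * ((S.δ ^ j)⁻¹ * y * S.δ ^ j)) * (S.δ ^ k)⁻¹ = _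
  rw [e1, h]
  show _ = (S.δ ^ j)⁻¹ * (S.δ ^ k * S.gcd S.δ ((S.δ ^ k)⁻¹ * y) * (S.δ ^ k)⁻¹) * S.δ ^ j
  group

lemma Tst_zpow (k j : ℤ) (y : G) : S.Tst k y (S.δ ^ j) = S.δ ^ j := by
  show (S.Pc k y)⁻¹ * S.δ ^ j * S.Pc k ((S.δ ^ j)⁻¹ * y * S.δ ^ j) = S.δ ^ j
  rw [S.Pc_conj k j y]
  group

lemma Tst_mem {x : G} {k s : ℤ} {y u : G} (hy : S.Gd x k s y) (hu : u ∈ S.M)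
    (hyu : S.Gd x k s (u⁻¹ * y * u)) : S.Tst k y u ∈ S.M := by
  have hu' : (S.δ ^ k)⁻¹ * u * S.δ ^ k ∈ S.M := S.tauPow_mem k hu
  -- A divides u' * δ
  have hA1 : S.dvd (S.gcd S.δ ((S.δ ^ k)⁻¹ * y)) (((S.δ ^ k)⁻¹ * u * S.δ ^ k) * S.δ) := by
    apply S.dvd_trans (S.gcd_dvd_left' _ _)
    have h1 := S.tau_mem hu'
    have e : S.δ⁻¹ * ((S.δ ^ k)⁻¹ * u * S.δ ^ k) * S.δ
        = S.δ⁻¹ * (((S.δ ^ k)⁻¹ * u * S.δ ^ k) * S.δ) := by group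
    show S.δ⁻¹ * (((S.δ ^ k)⁻¹ * u * S.δ ^ k) * S.δ) ∈ S.M
    rw [← e]; exact h1
  -- A divides u' * hat(y^u) = hat(y) * u
  have hA2 : S.dvd (S.gcd S.δ ((S.δ ^ k)⁻¹ * y))
      (((S.δ ^ k)⁻¹ * u * S.δ ^ k) * ((S.δ ^ k)⁻¹ * (u⁻¹ * y * u))) := by
    have h1 : S.dvd (S.gcd S.δ ((S.δ ^ k)⁻¹ * y)) (((S.δ ^ k)⁻¹ * y) * u) :=
      S.dvd_trans (S.gcd_dvd_right' _ _) (S.dvd_mul_right hu)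
    have e : ((S.δ ^ k)⁻¹ * u * S.δ ^ k) * ((S.δ ^ k)⁻¹ * (u⁻¹ * y * u))
        = ((S.δ ^ k)⁻¹ * y) * u := by group
    rwa [← e] at h1
  have h3 := S.dvd_gcd hA1 hA2
  rw [S.gcd_mul_left ((S.δ ^ k)⁻¹ * u * S.δ ^ k) S.δ ((S.δ ^ k)⁻¹ * (u⁻¹ * y * u))] at h3
  -- now conjugate back by δ^k
  have h4 := S.tauPow_mem (-k) h3
  have e : (S.δ ^ (-k))⁻¹ *
      ((S.gcd S.δ ((S.δ ^ k)⁻¹ * y))⁻¹ *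
        ((S.δ ^ k)⁻¹ * u * S.δ ^ k * S.gcd S.δ ((S.δ ^ k)⁻¹ * (u⁻¹ * y * u)))) * S.δ ^ (-k)
      = S.Tst k y u := by
    show _ = (S.Pc k y)⁻¹ * u * S.Pc k (u⁻¹ * y * u)
    show _ = (S.δ ^ k * S.gcd S.δ ((S.δ ^ k)⁻¹ * y) * (S.δ ^ k)⁻¹)⁻¹ * u *
        (S.δ ^ k * S.gcd S.δ ((S.δ ^ k)⁻¹ * (u⁻¹ * y * u)) * (S.δ ^ k)⁻¹)
    rw [zpow_neg]
    group
  rwa [e] at h4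

lemma Tst_cyc {k : ℤ} {y u : G} (hy : S.IsInf y k) (hyu : S.IsInf (u⁻¹ * y * u) k) :
    S.cyc (u⁻¹ * y * u) = (S.Tst k y u)⁻¹ * S.cyc y * S.Tst k y u := by
  rw [S.cyc_eq hy, S.cyc_eq hyu]
  show cj (u⁻¹ * y * u) (S.Pc k (u⁻¹ * y * u)) = _
  simp only [cj, Tst]
  group

lemma Tst_gcd {x : G} {k s : ℤ} (C : Ctx S x k s) {y u v : G} (hy : S.Gd x k s y)
    (hu : u ∈ S.M) (hv : v ∈ S.M)
    (hgu : S.Gd x k s (u⁻¹ * y * u)) (hgv : S.Gd x k s (v⁻¹ * y * v)) :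
    S.Tst k y (S.gcd u v) = S.gcd (S.Tst k y u) (S.Tst k y v) := by
  obtain ⟨hg_mem, hgw⟩ := S.Gd_gcd C hy hu hv hgu hgv
  have hgw' : S.Gd x k s ((S.gcd u v)⁻¹ * y * S.gcd u v) := hgw
  -- direction one: T(g) divides T(u) and T(v)
  have dir1 : ∀ t : G, t ∈ S.M → S.Gd x k s (t⁻¹ * y * t) → S.dvd (S.gcd u v) t →
      S.dvd (S.Tst k y (S.gcd u v)) (S.Tst k y t) := by
    intro t ht hgt hdvd
    have earg : ((S.gcd u v)⁻¹ * t)⁻¹ * ((S.gcd u v)⁻¹ * y * S.gcd u v) * ((S.gcd u v)⁻¹ * t)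
        = t⁻¹ * y * t := by group
    have hmem := S.Tst_mem (u := (S.gcd u v)⁻¹ * t) hgw' hdvd (by rw [earg]; exact hgt)
    have e : S.Tst k ((S.gcd u v)⁻¹ * y * S.gcd u v) ((S.gcd u v)⁻¹ * t)
        = (S.Tst k y (S.gcd u v))⁻¹ * S.Tst k y t := by
      simp only [Tst]
      rw [earg]
      group
    show (S.Tst k y (S.gcd u v))⁻¹ * S.Tst k y t ∈ S.M
    rw [← e]; exact hmem
  have d1u := dir1 u hu hgu (S.gcd_dvd_left' u v)
  have d1v := dir1 v hv hgv (S.gcd_dvd_right' u v)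
  -- direction two
  have key1 : ∀ t : G, t * S.Pc k (t⁻¹ * y * t) * S.δ ^ k
      = S.gcd (t * S.δ ^ (k + 1)) (y * t) := by
    intro t
    have e0 : t * S.Pc k (t⁻¹ * y * t) * S.δ ^ k
        = t * (S.Pc k (t⁻¹ * y * t) * S.δ ^ k) := by group
    rw [e0, S.Pc_mul k (t⁻¹ * y * t), ← S.gcd_mul_left t (S.δ ^ (k + 1)) (t⁻¹ * y * t)]
    congr 1
    group
  have step : ∀ t : G, S.dvd (S.gcd (S.Tst k y u) (S.Tst k y v)) (S.Tst k y t) →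
      S.dvd (S.Pc k y * S.gcd (S.Tst k y u) (S.Tst k y v) * S.δ ^ k)
        (S.gcd (t * S.δ ^ (k + 1)) (y * t)) := by
    intro t hdvd
    rw [← key1 t]
    have h1 := S.tauPow_mem k hdvd
    have e : (S.δ ^ k)⁻¹ * ((S.gcd (S.Tst k y u) (S.Tst k y v))⁻¹ * S.Tst k y t) * S.δ ^ k
        = (S.Pc k y * S.gcd (S.Tst k y u) (S.Tst k y v) * S.δ ^ k)⁻¹ *
          (t * S.Pc k (t⁻¹ * y * t) * S.δ ^ k) := by
      simp only [Tst]
      group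
    show (S.Pc k y * S.gcd (S.Tst k y u) (S.Tst k y v) * S.δ ^ k)⁻¹ *
        (t * S.Pc k (t⁻¹ * y * t) * S.δ ^ k) ∈ S.M
    rw [← e]; exact h1
  have hu2 := step u (S.gcd_dvd_left' _ _)
  have hv2 := step v (S.gcd_dvd_right' _ _)
  -- combine
  have hc1 : S.dvd (S.Pc k y * S.gcd (S.Tst k y u) (S.Tst k y v) * S.δ ^ k)
      (S.gcd u v * S.δ ^ (k + 1)) := by
    have h1 := S.dvd_gcd (S.dvd_trans hu2 (S.gcd_dvd_left' _ _))
      (S.dvd_trans hv2 (S.gcd_dvd_left' _ _))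
    rwa [← S.gcd_mul_zpow u v (k + 1)] at h1
  have hc2 : S.dvd (S.Pc k y * S.gcd (S.Tst k y u) (S.Tst k y v) * S.δ ^ k)
      (y * S.gcd u v) := by
    have h1 := S.dvd_gcd (S.dvd_trans hu2 (S.gcd_dvd_right' _ _))
      (S.dvd_trans hv2 (S.gcd_dvd_right' _ _))
    rwa [S.gcd_mul_left y u v] at h1
  have hc3 := S.dvd_gcd hc1 hc2
  rw [← key1 (S.gcd u v)] at hc3
  -- conjugate back to get the divisibility of transports
  have h4 := S.tauPow_mem (-k) hc3
  have dir2 : S.dvd (S.gcd (S.Tst k y u) (S.Tst k y v)) (S.Tst k y (S.gcd u v)) := by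
    have e : (S.δ ^ (-k))⁻¹ *
        ((S.Pc k y * S.gcd (S.Tst k y u) (S.Tst k y v) * S.δ ^ k)⁻¹ *
          (S.gcd u v * S.Pc k ((S.gcd u v)⁻¹ * y * S.gcd u v) * S.δ ^ k)) * S.δ ^ (-k)
        = (S.gcd (S.Tst k y u) (S.Tst k y v))⁻¹ * S.Tst k y (S.gcd u v) := by
      simp only [Tst]
      rw [zpow_neg]
      group
    show (S.gcd (S.Tst k y u) (S.Tst k y v))⁻¹ * S.Tst k y (S.gcd u v) ∈ S.M
    rw [← e]; exact h4
  exact S.dvd_antisymm (S.dvd_gcd d1u d1v) dir2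

lemma Tst_mono {x : G} {k s : ℤ} (C : Ctx S x k s) {y u v : G} (hy : S.Gd x k s y)
    (hu : u ∈ S.M) (hv : v ∈ S.M)
    (hgu : S.Gd x k s (u⁻¹ * y * u)) (hgv : S.Gd x k s (v⁻¹ * y * v))
    (huv : S.dvd u v) : S.dvd (S.Tst k y u) (S.Tst k y v) := by
  have h1 : S.gcd u v = u := S.gcd_eq_left huv
  have h2 := S.Tst_gcd C hy hu hv hgu hgv
  rw [h1] at h2
  rw [h2]
  exact S.gcd_dvd_right' _ _

/-! ### Iterated transport along the cycling orbit -/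

/-- Iterated transport of `w` along the cycling orbit of `ybase`. -/
def Titer (k : ℤ) (ybase w : G) (n : ℕ) : G :=
  Nat.rec w (fun i wi => S.Tst k (S.cyc^[i] ybase) wi) n

lemma Gd_iterate_cyc {x : G} {k s : ℤ} (C : Ctx S x k s) {w : G} (h : S.Gd x k s w) :
    ∀ i : ℕ, S.Gd x k s (S.cyc^[i] w) := by
  intro i
  induction i with
  | zero => simpa using h
  | succ i ih =>
      rw [Function.iterate_succ_apply']
      exact (S.Gd_cyc C ih).1

lemma Titer_spec {x : G} {k s : ℤ} (C : Ctx S x k s) {y z : G} (hyG : S.Gd x k s y)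
    (hzG : S.Gd x k s z) (b : ℤ) {w : G} (hw : w ∈ S.M) (hcj : w⁻¹ * y * w = z)
    (hb : w⁻¹ * S.δ ^ b ∈ S.M) (hbpos : 0 ≤ b) :
    ∀ i : ℕ, S.Titer k y w i ∈ S.M ∧
      ((S.Titer k y w i)⁻¹ * (S.cyc^[i] y) * S.Titer k y w i = S.cyc^[i] z) ∧
      (S.Titer k y w i)⁻¹ * S.δ ^ b ∈ S.M := by
  intro i
  induction i with
  | zero => exact ⟨hw, hcj, hb⟩
  | succ i ih =>
      obtain ⟨ih1, ih2, ih3⟩ := ih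
      have hYG : S.Gd x k s (S.cyc^[i] y) := S.Gd_iterate_cyc C hyG i
      have hZG : S.Gd x k s (S.cyc^[i] z) := S.Gd_iterate_cyc C hzG i
      have hGyu : S.Gd x k s ((S.Titer k y w i)⁻¹ * (S.cyc^[i] y) * S.Titer k y w i) := by
        rw [ih2]; exact hZG
      have hTdef : S.Titer k y w (i + 1) = S.Tst k (S.cyc^[i] y) (S.Titer k y w i) := rfl
      refine ⟨?_, ?_, ?_⟩
      · rw [hTdef]
        exact S.Tst_mem hYG ih1 hGyu
      · rw [hTdef]
        have h2 := S.Tst_cyc (u := S.Titer k y w i) hYG.2.1 hGyu.2.1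
        rw [ih2] at h2
        rw [Function.iterate_succ_apply', Function.iterate_succ_apply']
        exact h2.symm
      · rw [hTdef]
        have hGdelta : S.Gd x k s ((S.δ ^ b)⁻¹ * (S.cyc^[i] y) * S.δ ^ b) :=
          S.Gd_cj_zpow C hYG b
        have hmono := S.Tst_mono C hYG ih1 (S.zpow_mem_of_nonneg hbpos) hGyu hGdelta ih3
        rwa [S.Tst_zpow k b (S.cyc^[i] y)] at hmono

lemma Titer_add (k : ℤ) (y w : G) (N : ℕ) (hN : S.cyc^[N] y = y) :
    ∀ i : ℕ, S.Titer k y w (i + N) = S.Titer k y (S.Titer k y w N) i := by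
  intro i
  induction i with
  | zero => rw [Nat.zero_add]; rfl
  | succ i ih =>
      have e : i + 1 + N = (i + N) + 1 := by omega
      rw [e]
      show S.Tst k (S.cyc^[i + N] y) (S.Titer k y w (i + N)) = _
      have eY : S.cyc^[i + N] y = S.cyc^[i] y := by
        rw [Function.iterate_add_apply, hN]
      rw [eY, ih]
      rfl

lemma Titer_mul (k : ℤ) (y : G) (N : ℕ) (hN : S.cyc^[N] y = y) :
    ∀ (j : ℕ) (w : G), S.Titer k y w (j * N) = (fun v => S.Titer k y v N)^[j] w := by
  intro j
  induction j with
  | zero => intro w; rw [Nat.zero_mul]; rfl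
  | succ j ih =>
      intro w
      have e : (j + 1) * N = j * N + N := by ring
      rw [e, Nat.add_comm (j * N) N]
      have := S.Titer_add k y w N hN (j * N)
      rw [Nat.add_comm N (j * N), this, ih (S.Titer k y w N)]
      rw [Function.iterate_succ_apply]

/-! ### The key step: one simple conjugation towards `z` inside the ultra summit set -/

lemma step_lemma {x : G} {k s : ℤ} (C : Ctx S x k s) {y z u : G} (m : ℕ)
    (hyU : S.InUS x y) (hzU : S.InUS x z)
    (hyG : S.Gd x k s y) (hzG : S.Gd x k s z)
    (hu : u ∈ S.M) (hcj : u⁻¹ * y * u = z) (hbound : u⁻¹ * S.δ ^ (m + 1 : ℕ) ∈ S.M) :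
    ∃ c r : G, S.Simple c ∧ S.InUS x (c⁻¹ * y * c) ∧ S.Gd x k s (c⁻¹ * y * c) ∧ r ∈ S.M ∧
      r⁻¹ * (c⁻¹ * y * c) * r = z ∧ r⁻¹ * S.δ ^ (m : ℕ) ∈ S.M := by
  classical
  obtain ⟨hySS, ny, hny, hyper⟩ := hyU
  obtain ⟨hzSS, nz, hnz, hzper⟩ := hzU
  set N := ny * nz with hNdef
  have hNpos : 0 < N := Nat.mul_pos hny hnz
  have hyN : S.cyc^[N] y = y := by
    rw [hNdef, Function.iterate_mul]
    exact Function.iterate_fixed hyper nz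
  have hzN : S.cyc^[N] z = z := by
    rw [hNdef, Nat.mul_comm, Function.iterate_mul]
    exact Function.iterate_fixed hzper ny
  have hbz : u⁻¹ * S.δ ^ ((m + 1 : ℕ) : ℤ) ∈ S.M := by
    rwa [zpow_natCast]
  have hspec := S.Titer_spec C hyG hzG ((m + 1 : ℕ) : ℤ) hu hcj hbz (by positivity)
  -- pigeonhole on the iterates of the N-fold transport
  set F : G → G := fun v => S.Titer k y v N with hF
  have hSD : ∀ j : ℕ, S.SD (m + 1) (F^[j] u) := by
    intro j
    have := S.Titer_mul k y N hyN j u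
    rw [← this]
    obtain ⟨h1, _, h3⟩ := hspec (j * N)
    apply S.SD_of_dvd_pow h1
    rwa [zpow_natCast] at h3
  haveI : Finite {v : G // S.SD (m + 1) v} := (S.SD_finite (m + 1)).to_subtype
  obtain ⟨j₁, j₂, hjne, hjeq⟩ := Finite.exists_ne_map_eq_of_infinite
    (fun j : ℕ => (⟨F^[j] u, hSD j⟩ : {v : G // S.SD (m + 1) v}))
  have hjeq' : F^[j₁] u = F^[j₂] u := congrArg Subtype.val hjeq
  obtain ⟨j₁, j₂, hjlt, hjeq⟩ : ∃ j₁ j₂ : ℕ, j₁ < j₂ ∧ F^[j₁] u = F^[j₂] u := by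
    rcases lt_or_gt_of_ne hjne with h | h
    · exact ⟨j₁, j₂, h, hjeq'⟩
    · exact ⟨j₂, j₁, h, hjeq'.symm⟩
  set ustar := F^[j₁] u with hustar
  have hustar_eq : ustar = S.Titer k y u (j₁ * N) := by
    rw [hustar, S.Titer_mul k y N hyN j₁ u]
  have hYmul : ∀ j : ℕ, S.cyc^[j * N] y = y := by
    intro j
    rw [Nat.mul_comm, Function.iterate_mul]
    exact Function.iterate_fixed hyN j
  have hZmul : ∀ j : ℕ, S.cyc^[j * N] z = z := by
    intro j
    rw [Nat.mul_comm, Function.iterate_mul]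
    exact Function.iterate_fixed hzN j
  have hustar_mem : ustar ∈ S.M := by rw [hustar_eq]; exact (hspec (j₁ * N)).1
  have hustar_cj : ustar⁻¹ * y * ustar = z := by
    have h2 := (hspec (j₁ * N)).2.1
    rw [hYmul j₁, hZmul j₁] at h2
    rw [hustar_eq]; exact h2
  have hustar_b : ustar⁻¹ * S.δ ^ ((m + 1 : ℕ) : ℤ) ∈ S.M := by
    rw [hustar_eq]; exact (hspec (j₁ * N)).2.2
  -- the transport orbit of ustar is purely periodic with period p * N
  set p := j₂ - j₁ with hp
  have hppos : 0 < p := by omega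
  have hFping : F^[p] ustar = ustar := by
    rw [hustar, ← Function.iterate_add_apply]
    have : p + j₁ = j₂ := by omega
    rw [this, ← hjeq]
  set P₀ := p * N with hP₀
  have hP₀pos : 0 < P₀ := Nat.mul_pos hppos hNpos
  have hUP₀ : S.Titer k y ustar P₀ = ustar := by
    rw [hP₀, S.Titer_mul k y N hyN p ustar]
    exact hFping
  -- invariants for the orbit of ustar
  have hspec' := S.Titer_spec C hyG hzG ((m + 1 : ℕ) : ℤ) hustar_mem hustar_cj hustar_b
    (by positivity)
  -- the head c = δ ∧ ustar
  set c := S.gcd S.δ ustar with hcdef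
  have hc_simple : S.Simple c := ⟨S.gcd_mem S.δ_mem hustar_mem, S.gcd_dvd_left _ _⟩
  have hGdtau : ∀ i : ℕ, S.Gd x k s (S.δ⁻¹ * (S.cyc^[i] y) * S.δ) := by
    intro i
    have := S.Gd_cj_zpow C (S.Gd_iterate_cyc C hyG i) 1
    simp only [cj, zpow_one] at this
    exact this
  have hGdU : ∀ i : ℕ, S.Gd x k s
      ((S.Titer k y ustar i)⁻¹ * (S.cyc^[i] y) * S.Titer k y ustar i) := by
    intro i
    rw [(hspec' i).2.1]
    exact S.Gd_iterate_cyc C hzG i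
  have hGdC : ∀ i : ℕ, S.Gd x k s ((S.gcd S.δ (S.Titer k y ustar i))⁻¹ *
      (S.cyc^[i] y) * S.gcd S.δ (S.Titer k y ustar i)) := by
    intro i
    have h1 := (S.Gd_gcd C (S.Gd_iterate_cyc C hyG i) S.δ_mem (hspec' i).1
      (by
        have := hGdtau i
        show S.Gd x k s (cj (S.cyc^[i] y) S.δ)
        simp only [cj]
        exact this)
      (hGdU i)).2
    exact h1
  -- the transported gcd sequence
  have hCinv : ∀ i : ℕ, S.Titer k y c i = S.gcd S.δ (S.Titer k y ustar i) ∧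
      (S.Titer k y c i)⁻¹ * (S.cyc^[i] y) * S.Titer k y c i
        = S.cyc^[i] (c⁻¹ * y * c) := by
    intro i
    induction i with
    | zero => exact ⟨rfl, rfl⟩
    | succ i ih =>
        obtain ⟨ih1, ih2⟩ := ih
        have hYG := S.Gd_iterate_cyc C hyG i
        have hTdefc : S.Titer k y c (i + 1) = S.Tst k (S.cyc^[i] y) (S.Titer k y c i) := rfl
        have hTdefu : S.Titer k y ustar (i + 1)
            = S.Tst k (S.cyc^[i] y) (S.Titer k y ustar i) := rfl
        have hgc : S.Tst k (S.cyc^[i] y) (S.gcd S.δ (S.Titer k y ustar i))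
            = S.gcd (S.Tst k (S.cyc^[i] y) S.δ) (S.Tst k (S.cyc^[i] y) (S.Titer k y ustar i)) :=
          S.Tst_gcd C hYG S.δ_mem (hspec' i).1 (hGdtau i) (hGdU i)
        have hTd : S.Tst k (S.cyc^[i] y) S.δ = S.δ := by
          have := S.Tst_zpow k 1 (S.cyc^[i] y)
          rwa [zpow_one] at this
        constructor
        · rw [hTdefc, ih1, hgc, hTd, hTdefu]
        · have hGdCi : S.Gd x k s ((S.Titer k y c i)⁻¹ * (S.cyc^[i] y) * S.Titer k y c i) := by
            rw [ih1]; exact hGdC i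
          have h2 := S.Tst_cyc (u := S.Titer k y c i) hYG.2.1 hGdCi.2.1
          rw [ih2] at h2
          rw [hTdefc, Function.iterate_succ_apply', Function.iterate_succ_apply']
          exact h2.symm
  -- conclude: y^c is in the ultra summit set
  have hCP : S.Titer k y c P₀ = c := by
    rw [(hCinv P₀).1, hUP₀]
  have hper : S.cyc^[P₀] (c⁻¹ * y * c) = c⁻¹ * y * c := by
    have h2 := (hCinv P₀).2
    rw [hCP] at h2
    rw [← h2]
    have : S.cyc^[P₀] y = y := by rw [hP₀]; exact hYmul p
    rw [this]
  have hGdyc : S.Gd x k s (c⁻¹ * y * c) := by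
    have := hGdC 0
    exact this
  have hInUS : S.InUS x (c⁻¹ * y * c) := ⟨S.Gd_to_InSS C hGdyc, P₀, hP₀pos, hper⟩
  -- the remainder
  set r := c⁻¹ * ustar with hrdef
  have hr_mem : r ∈ S.M := S.gcd_dvd_right S.δ ustar
  have hr_cj : r⁻¹ * (c⁻¹ * y * c) * r = z := by
    rw [hrdef, ← hustar_cj]
    group
  have hb1 : ustar⁻¹ * S.δ ^ (m + 1 : ℕ) ∈ S.M := by
    rw [← zpow_natCast]
    exact hustar_b
  have hstrip := S.strip hustar_mem hb1
  exact ⟨c, r, hc_simple, hInUS, hGdyc, hr_mem, hr_cj, hstrip.2⟩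

/-! ### The chain lemma -/

lemma chain_lemma {x : G} {k s : ℤ} (C : Ctx S x k s) :
    ∀ (m : ℕ) (y u : G), S.InUS x y → S.Gd x k s y → u ∈ S.M →
      u⁻¹ * S.δ ^ (m : ℕ) ∈ S.M → S.InUS x (u⁻¹ * y * u) → S.Gd x k s (u⁻¹ * y * u) →
      ∃ (t : ℕ) (ys cs : ℕ → G),
        ys 0 = y ∧ ys t = u⁻¹ * y * u ∧ (∀ i, i ≤ t → S.InUS x (ys i)) ∧
        ∀ i, 1 ≤ i → i ≤ t → S.Simple (cs i) ∧ ys i = (cs i)⁻¹ * ys (i - 1) * cs i := by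
  intro m
  induction m with
  | zero =>
      intro y u hyU _ hu hb _ _
      have hu1 : u = 1 := S.eq_one_of_mem_inv_mem hu (by simpa using hb)
      subst hu1
      refine ⟨0, fun _ => y, fun _ => 1, rfl, by simp, ?_, ?_⟩
      · intro i hi
        exact hyU
      · intro i hi1 hi0
        omega
  | succ m ih =>
      intro y u hyU hyG hu hb hzU hzG
      obtain ⟨c₀, r, hc₀s, hy₁U, hy₁G, hr, hrcj, hrb⟩ :=
        S.step_lemma C m hyU hzU hyG hzG hu rfl hb
      have hzU' : S.InUS x (r⁻¹ * (c₀⁻¹ * y * c₀) * r) := by rw [hrcj]; exact hzU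
      have hzG' : S.Gd x k s (r⁻¹ * (c₀⁻¹ * y * c₀) * r) := by rw [hrcj]; exact hzG
      obtain ⟨t', ys', cs', h0', ht', hU', hstep'⟩ :=
        ih (c₀⁻¹ * y * c₀) r hy₁U hy₁G hr hrb hzU' hzG'
      refine ⟨t' + 1, fun i => if i = 0 then y else ys' (i - 1),
        fun i => if i ≤ 1 then c₀ else cs' (i - 1), by simp, ?_, ?_, ?_⟩
      · simp only [Nat.add_eq_zero, Nat.succ_ne_zero, and_false, if_false]
        simp only [Nat.add_sub_cancel]
        rw [ht', hrcj]
      · intro i hi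
        rcases Nat.eq_zero_or_pos i with h0 | hpos
        · subst h0; simpa using hyU
        · have : i ≠ 0 := by omega
          simp only [this, if_false]
          exact hU' (i - 1) (by omega)
      · intro i hi1 hit
        rcases Nat.eq_or_lt_of_le hi1 with h1 | h2
        · -- i = 1
          have : i = 1 := h1.symm
          subst this
          simp only [le_refl, if_true, Nat.sub_self, if_pos rfl, Nat.one_ne_zero, if_false]
          exact ⟨hc₀s, by rw [h0']⟩
        · -- 2 ≤ i
          have hne0 : i ≠ 0 := by omega
          have hnle : ¬ (i ≤ 1) := by omega
          have hne0' : i - 1 ≠ 0 := by omega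
          simp only [hne0, hnle, hne0', if_false]
          obtain ⟨hsimp, hrel⟩ := hstep' (i - 1) (by omega) (by omega)
          exact ⟨hsimp, hrel⟩
end Garside
/-- Convexity of ultra summit sets: any two elements `y, z ∈ U_x` are connected
by a chain of conjugations by simple elements staying inside `U_x`. -/
theorem US_convex {G : Type*} [Group G] (S : Garside G)
    (x y z : G) (hy : S.InUS x y) (hz : S.InUS x z) :
    ∃ (t : ℕ) (ys c : ℕ → G),
      ys 0 = y ∧ ys t = z ∧ (∀ i, i ≤ t → S.InUS x (ys i)) ∧
      ∀ i, 1 ≤ i → i ≤ t → S.Simple (c i) ∧ ys i = (c i)⁻¹ * ys (i - 1) * c i := by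
  obtain ⟨hySS, ny, hny, hyper⟩ := hy
  obtain ⟨conj_y, ⟨k, hki, hmax⟩, ⟨s, hsi, hmin⟩⟩ := hySS
  have C : Garside.Ctx S x k s := ⟨hmax, hmin, ⟨y, k, hki⟩⟩
  have hyG : S.Gd x k s y := ⟨conj_y, hki, hsi⟩
  have hyU : S.InUS x y := ⟨S.Gd_to_InSS C hyG, ny, hny, hyper⟩
  have hzG : S.Gd x k s z := S.InSS_to_Gd C ⟨y, conj_y, hki, hsi⟩ hz.1
  have hconj_yz : IsConj y z := conj_y.symm.trans hz.1.1
  obtain ⟨cc, hcc⟩ := isConj_iff.mp hconj_yz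
  obtain ⟨e, hepos, hcent⟩ := S.exists_central_pow
  obtain ⟨a, ha, b, hb, hg⟩ := S.fractions cc⁻¹
  obtain ⟨n₀, hn₀⟩ := S.exists_dvd_pow ha
  set n := e * (n₀ + 1) with hn
  have hn₀n : n₀ ≤ n := by
    have h1 : n₀ + 1 ≤ e * (n₀ + 1) := Nat.le_mul_of_pos_left _ hepos
    omega
  set u := S.δ ^ n * cc⁻¹ with hu
  have hu_mem : u ∈ S.M := by
    have h1 : a⁻¹ * S.δ ^ n ∈ S.M := by
      have e2 : S.δ ^ n = S.δ ^ n₀ * S.δ ^ (n - n₀) := by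
        rw [← pow_add]; congr 1; omega
      rw [e2, ← mul_assoc]
      exact S.M.mul_mem hn₀ (pow_mem S.δ_mem _)
    have h2 := S.tauInvPow_mem_nat n h1
    have h3 := S.M.mul_mem h2 hb
    have e3 : S.δ ^ n * (a⁻¹ * S.δ ^ n) * (S.δ ^ n)⁻¹ * b = S.δ ^ n * (a⁻¹ * b) := by group
    rw [e3] at h3
    rw [hu, hg]
    exact h3
  have hcomm : S.δ ^ n * y = y * S.δ ^ n := by
    have h1 : Commute (S.δ ^ e) y := hcent y
    have h2 : S.δ ^ n = (S.δ ^ e) ^ (n₀ + 1) := by rw [← pow_mul]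
    rw [h2]
    exact h1.pow_left (n₀ + 1)
  have hu_cj : u⁻¹ * y * u = z := by
    rw [hu]
    have e4 : (S.δ ^ n * cc⁻¹)⁻¹ * y * (S.δ ^ n * cc⁻¹)
        = cc * ((S.δ ^ n)⁻¹ * y * S.δ ^ n) * cc⁻¹ := by group
    rw [e4]
    have e5 : (S.δ ^ n)⁻¹ * y * S.δ ^ n = y := by
      rw [mul_assoc, ← hcomm]
      group
    rw [e5]
    exact hcc
  obtain ⟨n₁, hn₁⟩ := S.exists_dvd_pow hu_mem
  have hzU : S.InUS x (u⁻¹ * y * u) := by rw [hu_cj]; exact hz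
  have hzG' : S.Gd x k s (u⁻¹ * y * u) := by rw [hu_cj]; exact hzG
  obtain ⟨t, ys, cs, h0, ht, hUS, hsteps⟩ :=
    S.chain_lemma C n₁ y u hyU hyG hu_mem hn₁ hzU hzG'
  refine ⟨t, ys, cs, h0, ?_, hUS, hsteps⟩
  rw [ht, hu_cj]

end GarsideFormal
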